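/- arXiv:2201.05642 — 8 statements merged into one kernel-verified Lean document; each statement's English description precedes it below -/
import Mathlib

section
/- Let p be a prime and let a ≥ b ≥ 1 be integers. If G ≅ C_{p^a} × C_{p^b}, then the number of maximal cyclic subgroups of G equals p^{b-1}((a-b)(p-1) + p + 1). -/
def IsMaximalCyclic {G : Type*} [Group G] (H : Subgroup G) : Prop :=
  IsCyclic H ∧ ∀ K : Subgroup G, IsCyclic K → H ≤ K → H = K

/-! In a p-group, `zpowers g` is maximal cyclic iff `g` is not a `p`-th power, and
`zpowers (g ^ k) = zpowers g` whenever `p ∤ k`. In `C_{p^a} × C_{p^b}` the element `(X, Y)` is a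
`p`-th power iff `p ∣ X` and `p ∣ Y`. If `p ∤ X`, a power prime to `p` normalises the generator to
`(1, Y)` with `Y` unique mod `p^b`: `p^b` subgroups. Otherwise `p ∤ Y` and it normalises to
`(p Z, 1)`, where `Z` mod `p^(a-1)` is determined up to multiplication by `k ≡ 1 [MOD p^b]`.
Writing `Z = p^v U` with `p ∤ U`, such a multiplication can change `U` exactly within its class
mod `p^b`, so each subgroup has a unique `Z` with `U < p^b`; there are
`p^(b-1) + (a - b) φ(p^b)` of these. -/

open Subgroup

section MaximalCyclic

variable {G G' : Type*} [Group G] [Group G']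

lemma IsMaximalCyclic.mapSubgroup {K : Subgroup G} (hK : IsMaximalCyclic K) (e : G ≃* G') :
    IsMaximalCyclic (e.mapSubgroup K) := by
  refine ⟨(K.equivMapOfInjective _ e.injective).isCyclic.mp hK.1, fun L hL hle => ?_⟩
  have hK_eq : K = e.symm.mapSubgroup L :=
    hK.2 _ ((L.equivMapOfInjective _ e.symm.injective).isCyclic.mp hL)
      (e.mapSubgroup.le_symm_apply.mpr hle)
  rw [hK_eq, ← MulEquiv.symm_mapSubgroup, OrderIso.apply_symm_apply]

lemma ncard_setOf_isMaximalCyclic_congr (e : G ≃* G') :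
    {K : Subgroup G | IsMaximalCyclic K}.ncard = {K : Subgroup G' | IsMaximalCyclic K}.ncard := by
  rw [← Set.ncard_image_of_injective _ e.mapSubgroup.injective]
  congr 1
  ext K'
  refine ⟨?_, fun hK' => ⟨e.symm.mapSubgroup K', hK'.mapSubgroup e.symm, ?_⟩⟩
  · rintro ⟨K, hK, rfl⟩
    exact hK.mapSubgroup e
  · rw [← MulEquiv.symm_mapSubgroup, OrderIso.apply_symm_apply]

end MaximalCyclic

section PGroup

variable {G : Type*} [Group G] {p : ℕ} [hp : Fact p.Prime]

lemma IsPGroup.zpowers_pow_eq_self (hG : IsPGroup p G) (g : G) {n : ℕ} (hn : ¬ p ∣ n) :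
    zpowers (g ^ n) = zpowers g := by
  refine le_antisymm (zpowers_le.2 (pow_mem (mem_zpowers g) n)) (zpowers_le.2 ?_)
  obtain ⟨k, hk⟩ := (IsPGroup.iff_orderOf.mp hG) g
  rw [mem_zpowers_pow_iff, hk, ← Nat.coprime_iff_gcd_eq_one]
  exact (hp.out.coprime_iff_not_dvd.2 hn).symm.pow_right k

lemma IsPGroup.eq_one_of_zpowers_pow_eq (hG : IsPGroup p G) {x : G}
    (h : zpowers (x ^ p) = zpowers x) : x = 1 := by
  obtain ⟨k, hk⟩ := (IsPGroup.iff_orderOf.mp hG) x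
  have hord : orderOf (x ^ p) = orderOf x := by
    rw [← Nat.card_zpowers, h, Nat.card_zpowers]
  rcases k with _ | k
  · exact orderOf_eq_one_iff.mp (by simpa using hk)
  · rw [orderOf_pow_of_dvd hp.out.ne_zero (hk ▸ dvd_pow_self p k.succ_ne_zero), hk] at hord
    have := Nat.div_lt_self (pow_pos hp.out.pos (k + 1)) hp.out.one_lt
    omega

lemma IsPGroup.isMaximalCyclic_zpowers_iff [Nontrivial G] (hG : IsPGroup p G) (g : G) :
    IsMaximalCyclic (zpowers g) ↔ ¬ ∃ x, x ^ p = g := by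
  constructor
  · rintro ⟨-, hmax⟩ ⟨x, rfl⟩
    have hx : x = 1 := hG.eq_one_of_zpowers_pow_eq
      (hmax _ inferInstance (zpowers_le.2 (pow_mem (mem_zpowers x) p)))
    obtain ⟨y, hy⟩ := exists_ne (1 : G)
    have hy_bot : ⊥ = zpowers y := by simpa [hx] using hmax (zpowers y) inferInstance
    exact hy (zpowers_eq_bot.mp hy_bot.symm)
  · refine fun hg => ⟨inferInstance, fun K hK hle => ?_⟩
    obtain ⟨h, rfl⟩ := (K.isCyclic_iff_exists_zpowers_eq_top).mp hK
    obtain ⟨n, rfl⟩ := ((hG.isOfFinOrder hp.out.ne_zero h).mem_powers_iff_mem_zpowers).mpr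
      (hle (mem_zpowers g))
    have hn : ¬ p ∣ n := by
      rintro ⟨m, rfl⟩
      exact hg ⟨h ^ m, by rw [← pow_mul, mul_comm]⟩
    exact hG.zpowers_pow_eq_self h hn

end PGroup

lemma Nat.not_dvd_of_modEq_one {p q n : ℕ} (hp : p ≠ 1) (hpq : p ∣ q) (h : n ≡ 1 [MOD q]) :
    ¬ p ∣ n :=
  fun hn => hp (Nat.dvd_one.mp ((h.dvd_iff hpq).mp hn))

lemma Nat.exists_mul_modEq_one {U N : ℕ} (hU : U.Coprime N) : ∃ m, m * U ≡ 1 [MOD N] := by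
  rcases eq_or_ne N 0 with rfl | hN
  · exact ⟨1, by rw [(Nat.coprime_zero_right U).mp hU]⟩
  · obtain ⟨m, -, hm⟩ := Nat.exists_mul_mod_eq_of_coprime 1 hU hN
    exact ⟨m, by rwa [mul_comm] at hm⟩

lemma Nat.exists_modEq_one_mul_modEq {M N U W : ℕ} (hU : U.Coprime N) (hMN : M ∣ N)
    (hW : W ≡ U [MOD M]) : ∃ n, n ≡ 1 [MOD M] ∧ n * U ≡ W [MOD N] := by
  obtain ⟨m, hm⟩ := Nat.exists_mul_modEq_one hU
  refine ⟨m * W, ?_, ?_⟩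
  · calc m * W ≡ m * U [MOD M] := hW.mul_left m
      _ ≡ 1 [MOD M] := hm.of_dvd hMN
  · calc m * W * U = m * U * W := by ring
      _ ≡ 1 * W [MOD N] := hm.mul_right W
      _ = W := one_mul W

section SmallOrdCompl

open Finset
open scoped Nat

def smallOrdCompl (p b c : ℕ) : Finset ℕ := {Z ∈ range (p ^ c) | ordCompl[p] Z < p ^ b}

variable {p b c : ℕ}

lemma smallOrdCompl_of_le (hp : 0 < p) (hcb : c ≤ b) : smallOrdCompl p b c = range (p ^ c) :=
  filter_true_of_mem fun Z hZ => (Nat.ordCompl_le Z p).trans_lt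
    ((mem_range.mp hZ).trans_le (Nat.pow_le_pow_right hp hcb))

lemma card_range_pow_filter_not_dvd (hp : p.Prime) (hb : 1 ≤ b) :
    #{Z ∈ range (p ^ b) | ¬ p ∣ Z} = φ (p ^ b) := by
  rw [Nat.totient_eq_card_coprime]
  congr 1
  ext Z
  simp [Nat.coprime_pow_left_iff (by omega : 0 < b), hp.coprime_iff_not_dvd]

lemma card_smallOrdCompl_succ (hp : p.Prime) (hb : 1 ≤ b) (hbc : b ≤ c + 1) :
    #(smallOrdCompl p b (c + 1)) = φ (p ^ b) + #(smallOrdCompl p b c) := by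
  have hsplit : smallOrdCompl p b (c + 1) =
      {Z ∈ range (p ^ b) | ¬ p ∣ Z} ∪
        (smallOrdCompl p b c).map ⟨(p * ·), mul_right_injective₀ hp.ne_zero⟩ := by
    ext Z
    simp only [smallOrdCompl, mem_union, mem_filter, mem_range, mem_map,
      Function.Embedding.coeFn_mk]
    by_cases hpZ : p ∣ Z
    · obtain ⟨W, rfl⟩ := hpZ
      have hcompl : ordCompl[p] (p * W) = ordCompl[p] W := by
        simpa using Nat.ordCompl_self_pow_mul W 1 hp
      simp [hcompl, pow_succ', Nat.mul_lt_mul_left hp.pos, mul_right_inj' hp.ne_zero]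
    · have hcompl : ordCompl[p] Z = Z :=
        (Nat.ordCompl_eq_self_iff_zero_or_not_dvd Z hp).mpr (Or.inr hpZ)
      have hle : p ^ b ≤ p ^ (c + 1) := Nat.pow_le_pow_right hp.pos hbc
      simp only [hcompl, hpZ, not_false_eq_true, and_true]
      constructor
      · exact fun h => Or.inl h.2
      · rintro (h | ⟨W, -, rfl⟩)
        · exact ⟨h.trans_le hle, h⟩
        · exact absurd (dvd_mul_right p W) hpZ
  rw [hsplit, card_union_of_disjoint, card_map, card_range_pow_filter_not_dvd hp hb]
  rw [disjoint_left]
  intro Z hZ hZ'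
  obtain ⟨W, -, rfl⟩ := mem_map.mp hZ'
  exact (mem_filter.mp hZ).2 (dvd_mul_right p W)

lemma card_smallOrdCompl (hp : p.Prime) (hb : 1 ≤ b) (hbc : b ≤ c + 1) :
    #(smallOrdCompl p b c) = p ^ (b - 1) + (c + 1 - b) * φ (p ^ b) := by
  induction c, (by omega : b - 1 ≤ c) using Nat.le_induction with
  | base => simp [smallOrdCompl_of_le hp.pos (Nat.sub_le b 1), show b - 1 + 1 - b = 0 by omega]
  | succ c hc ih =>
    rw [card_smallOrdCompl_succ hp hb (by omega), ih (by omega),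
      show c + 1 + 1 - b = c + 1 - b + 1 by omega]
    ring

lemma eq_of_mem_smallOrdCompl (hp : p.Prime) (hb : 1 ≤ b) {Z Z' n : ℕ}
    (hZ : Z ∈ smallOrdCompl p b c) (hZ' : Z' ∈ smallOrdCompl p b c)
    (hn : n ≡ 1 [MOD p ^ b]) (h : n * Z ≡ Z' [MOD p ^ c]) : Z = Z' := by
  simp only [smallOrdCompl, mem_filter, mem_range] at hZ hZ'
  rcases eq_or_ne Z 0 with rfl | hZ0
  · exact Nat.ModEq.eq_of_lt_of_lt (by simpa using h) hZ.1 hZ'.1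
  obtain ⟨v, U, hpU, hZU⟩ : ∃ v U, ¬ p ∣ U ∧ Z = p ^ v * U :=
    ⟨_, _, Nat.not_dvd_ordCompl hp hZ0, (Nat.ordProj_mul_ordCompl_eq_self Z p).symm⟩
  have hnZ : n * Z ≡ Z [MOD p ^ (v + b)] := by
    rw [hZU, pow_add, mul_left_comm]
    simpa using (hn.mul_right U).mul_left' (p ^ v)
  rcases le_or_gt c (v + b) with hc | hc
  · exact ((hnZ.of_dvd (pow_dvd_pow p hc)).symm.trans h).eq_of_lt_of_lt hZ.1 hZ'.1
  have hZZ' : Z ≡ Z' [MOD p ^ (v + b)] := hnZ.symm.trans (h.of_dvd (pow_dvd_pow p hc.le))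
  obtain ⟨W, rfl⟩ : p ^ v ∣ Z' :=
    (hZZ'.dvd_iff (pow_dvd_pow p (Nat.le_add_right v b))).mp ⟨U, hZU⟩
  rw [hZU, pow_add] at hZZ'
  have hUW : U ≡ W [MOD p ^ b] := Nat.ModEq.mul_left_cancel' (pow_ne_zero v hp.ne_zero) hZZ'
  have hpW : ¬ p ∣ W := fun hW => hpU ((hUW.dvd_iff (dvd_pow_self p (by omega))).mpr hW)
  rw [hZU, Nat.ordCompl_pow_mul_of_not_dvd v hp hpU] at hZ
  rw [Nat.ordCompl_pow_mul_of_not_dvd v hp hpW] at hZ'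
  rw [hZU, hUW.eq_of_lt_of_lt hZ.2 hZ'.2]

lemma exists_modEq_mem_smallOrdCompl (hp : p.Prime) (hb : 1 ≤ b) (Z : ℕ) :
    ∃ n, n ≡ 1 [MOD p ^ b] ∧ ∃ Z' ∈ smallOrdCompl p b c, n * Z ≡ Z' [MOD p ^ c] := by
  have hZmod : Z ≡ Z % p ^ c [MOD p ^ c] := (Nat.mod_modEq Z _).symm
  rcases eq_or_ne (Z % p ^ c) 0 with h0 | h0
  · refine ⟨1, rfl, 0, by simp [smallOrdCompl, pow_pos hp.pos], ?_⟩
    rwa [one_mul, ← h0]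
  obtain ⟨v, U, hpU, hZU⟩ : ∃ v U, ¬ p ∣ U ∧ Z % p ^ c = p ^ v * U :=
    ⟨_, _, Nat.not_dvd_ordCompl hp h0, (Nat.ordProj_mul_ordCompl_eq_self _ p).symm⟩
  have hWU : U % p ^ b ≡ U [MOD p ^ b] := Nat.mod_modEq U _
  have hpW : ¬ p ∣ U % p ^ b := fun hW => hpU ((hWU.dvd_iff (dvd_pow_self p (by omega))).mp hW)
  obtain ⟨n, hn1, hnU⟩ := Nat.exists_modEq_one_mul_modEq
    (Nat.Coprime.pow_right (b + c) ((hp.coprime_iff_not_dvd.2 hpU).symm))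
    (pow_dvd_pow p (Nat.le_add_right b c)) hWU
  refine ⟨n, hn1, p ^ v * (U % p ^ b), ?_, ?_⟩
  · simp only [smallOrdCompl, mem_filter, mem_range, Nat.ordCompl_pow_mul_of_not_dvd v hp hpW]
    refine ⟨?_, Nat.mod_lt _ (pow_pos hp.pos b)⟩
    calc p ^ v * (U % p ^ b) ≤ p ^ v * U := Nat.mul_le_mul_left _ (Nat.mod_le U _)
      _ = Z % p ^ c := hZU.symm
      _ < p ^ c := Nat.mod_lt _ (pow_pos hp.pos c)
  · calc n * Z ≡ n * (p ^ v * U) [MOD p ^ c] := hZU ▸ hZmod.mul_left n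
      _ = p ^ v * (n * U) := by ring
      _ ≡ p ^ v * (U % p ^ b) [MOD p ^ c] :=
        (hnU.of_dvd (pow_dvd_pow p (Nat.le_add_left c b))).mul_left _

end SmallOrdCompl

abbrev CyclicProd (m n : ℕ) : Type := Multiplicative (ZMod m) × Multiplicative (ZMod n)

namespace CyclicProd

open Multiplicative

variable {m n : ℕ}

def mk (X Y : ℕ) : CyclicProd m n := (ofAdd (X : ZMod m), ofAdd (Y : ZMod n))

lemma mk_pow (X Y k : ℕ) : (mk X Y : CyclicProd m n) ^ k = mk (k * X) (k * Y) := by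
  simp [mk, Prod.pow_def, ← ofAdd_nsmul]

lemma mk_eq_mk_iff {X Y X' Y' : ℕ} :
    (mk X Y : CyclicProd m n) = mk X' Y' ↔ X ≡ X' [MOD m] ∧ Y ≡ Y' [MOD n] := by
  simp [mk, Prod.ext_iff, ZMod.natCast_eq_natCast_iff]

lemma exists_eq_mk [NeZero m] [NeZero n] (g : CyclicProd m n) : ∃ X Y, g = mk X Y :=
  ⟨g.1.toAdd.val, g.2.toAdd.val, by simp [mk]⟩

lemma exists_pow_eq_mk_iff [NeZero m] [NeZero n] {p X Y : ℕ} (hm : p ∣ m) (hn : p ∣ n) :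
    (∃ z : CyclicProd m n, z ^ p = mk X Y) ↔ p ∣ X ∧ p ∣ Y := by
  constructor
  · rintro ⟨z, hz⟩
    obtain ⟨X₀, Y₀, rfl⟩ := exists_eq_mk z
    rw [mk_pow, mk_eq_mk_iff] at hz
    exact ⟨(hz.1.dvd_iff hm).mp (dvd_mul_right p X₀), (hz.2.dvd_iff hn).mp (dvd_mul_right p Y₀)⟩
  · rintro ⟨⟨X₀, rfl⟩, ⟨Y₀, rfl⟩⟩
    exact ⟨mk X₀ Y₀, mk_pow X₀ Y₀ p⟩

lemma isPGroup {p : ℕ} (a b : ℕ) : IsPGroup p (CyclicProd (p ^ a) (p ^ b)) :=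
  IsPGroup.of_card (n := a + b) <| by
    rw [Nat.card_prod, Nat.card_congr toAdd, Nat.card_congr toAdd, Nat.card_zmod, Nat.card_zmod,
      pow_add]

end CyclicProd

section CanonicalGenerator

open CyclicProd

variable {p b c : ℕ} [hp : Fact p.Prime]

def canonicalGenerator (p b c : ℕ) :
    Fin (p ^ b) ⊕ smallOrdCompl p b c → CyclicProd (p ^ (c + 1)) (p ^ b)
  | .inl Y => mk 1 Y
  | .inr Z => mk (p * Z) 1

lemma not_exists_pow_eq_canonicalGenerator (hb : 1 ≤ b)
    (s : Fin (p ^ b) ⊕ smallOrdCompl p b c) :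
    ¬ ∃ z, z ^ p = canonicalGenerator p b c s := by
  have hpc : p ∣ p ^ (c + 1) := dvd_pow_self p c.succ_ne_zero
  have hpb : p ∣ p ^ b := dvd_pow_self p (by omega)
  rcases s with Y | Z
  · exact fun hz => hp.out.not_dvd_one ((exists_pow_eq_mk_iff hpc hpb).mp hz).1
  · exact fun hz => hp.out.not_dvd_one ((exists_pow_eq_mk_iff hpc hpb).mp hz).2

lemma exists_pow_eq_canonicalGenerator (hb : 1 ≤ b) {X Y : ℕ} (h : ¬ (p ∣ X ∧ p ∣ Y)) :
    ∃ k, ¬ p ∣ k ∧ ∃ s, (mk X Y : CyclicProd (p ^ (c + 1)) (p ^ b)) ^ k =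
      canonicalGenerator p b c s := by
  have hpb : p ∣ p ^ b := dvd_pow_self p (by omega)
  by_cases hX : p ∣ X
  · obtain ⟨X₀, rfl⟩ := hX
    obtain ⟨m, hmY⟩ := Nat.exists_mul_modEq_one
      (Nat.Coprime.pow_right b (hp.out.coprime_iff_not_dvd.2 fun hY => h ⟨⟨X₀, rfl⟩, hY⟩).symm)
    obtain ⟨n, hn, Z, hZ, hnZ⟩ := exists_modEq_mem_smallOrdCompl hp.out hb (c := c) (m * X₀)
    refine ⟨n * m, fun hnm => ?_, .inr ⟨Z, hZ⟩, ?_⟩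
    · rcases hp.out.dvd_mul.mp hnm with hpn | hpm
      · exact Nat.not_dvd_of_modEq_one hp.out.ne_one hpb hn hpn
      · exact Nat.not_dvd_of_modEq_one hp.out.ne_one hpb hmY (dvd_mul_of_dvd_left hpm Y)
    · rw [canonicalGenerator, mk_pow, mk_eq_mk_iff, pow_succ']
      constructor
      · rw [show n * m * (p * X₀) = p * (n * (m * X₀)) by ring]
        exact hnZ.mul_left' p
      · calc n * m * Y = n * (m * Y) := mul_assoc n m Y
          _ ≡ n * 1 [MOD p ^ b] := hmY.mul_left n
          _ ≡ 1 [MOD p ^ b] := by rwa [mul_one]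
  · obtain ⟨n, hnX⟩ := Nat.exists_mul_modEq_one
      (Nat.Coprime.pow_right (c + 1) (hp.out.coprime_iff_not_dvd.2 hX).symm)
    refine ⟨n, fun hpn => ?_, .inl ⟨n * Y % p ^ b, Nat.mod_lt _ (pow_pos hp.out.pos b)⟩, ?_⟩
    · exact Nat.not_dvd_of_modEq_one hp.out.ne_one (dvd_pow_self p c.succ_ne_zero) hnX
        (dvd_mul_of_dvd_left hpn X)
    · rw [canonicalGenerator, mk_pow, mk_eq_mk_iff]
      exact ⟨hnX, (Nat.mod_modEq _ _).symm⟩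

lemma zpowers_canonicalGenerator_injective (hb : 1 ≤ b) (hbc : b ≤ c + 1) :
    Function.Injective fun s => zpowers (canonicalGenerator p b c s) := by
  have pow_eq_of_zpowers_eq {s t} (h : zpowers (canonicalGenerator p b c s) =
      zpowers (canonicalGenerator p b c t)) :
      ∃ k : ℕ, canonicalGenerator p b c t ^ k = canonicalGenerator p b c s :=
    mem_powers_iff_mem_zpowers.mpr (h ▸ mem_zpowers _)
  have not_modEq_one (k Z : ℕ) : ¬ k * (p * Z) ≡ 1 [MOD p ^ (c + 1)] := fun h =>
    Nat.not_dvd_of_modEq_one hp.out.ne_one (dvd_pow_self p c.succ_ne_zero) h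
      (Dvd.intro (k * Z) (by ring))
  rintro (Y | ⟨Z, hZ⟩) (Y' | ⟨Z', hZ'⟩) h
  · obtain ⟨k, hk⟩ := pow_eq_of_zpowers_eq h
    simp only [canonicalGenerator, mk_pow, mk_eq_mk_iff, mul_one] at hk
    have hk1 : k ≡ 1 [MOD p ^ b] := hk.1.of_dvd (pow_dvd_pow p hbc)
    have hYY' : Y' ≡ Y [MOD p ^ b] := by simpa using (hk1.mul_right Y').symm.trans hk.2
    exact congrArg Sum.inl (Fin.ext (hYY'.eq_of_lt_of_lt Y'.isLt Y.isLt).symm)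
  · obtain ⟨k, hk⟩ := pow_eq_of_zpowers_eq h
    simp only [canonicalGenerator, mk_pow, mk_eq_mk_iff] at hk
    exact absurd hk.1 (not_modEq_one k Z')
  · obtain ⟨k, hk⟩ := pow_eq_of_zpowers_eq h.symm
    simp only [canonicalGenerator, mk_pow, mk_eq_mk_iff] at hk
    exact absurd hk.1 (not_modEq_one k Z)
  · obtain ⟨k, hk⟩ := pow_eq_of_zpowers_eq h.symm
    simp only [canonicalGenerator, mk_pow, mk_eq_mk_iff, mul_one] at hk
    rw [mul_left_comm, pow_succ'] at hk
    have hZZ' : Z = Z' := eq_of_mem_smallOrdCompl hp.out hb hZ hZ' hk.2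
      (Nat.ModEq.mul_left_cancel' hp.out.ne_zero hk.1)
    subst hZZ'
    rfl

lemma range_zpowers_canonicalGenerator (hb : 1 ≤ b) :
    Set.range (fun s => zpowers (canonicalGenerator p b c s)) = {H | IsMaximalCyclic H} := by
  have hG := CyclicProd.isPGroup (p := p) (c + 1) b
  have : Fact (1 < p ^ (c + 1)) := ⟨Nat.one_lt_pow c.succ_ne_zero hp.out.one_lt⟩
  ext H
  constructor
  · rintro ⟨s, rfl⟩
    exact (hG.isMaximalCyclic_zpowers_iff _).mpr (not_exists_pow_eq_canonicalGenerator hb s)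
  · intro hH
    obtain ⟨g, rfl⟩ := (H.isCyclic_iff_exists_zpowers_eq_top).mp hH.1
    obtain ⟨X, Y, rfl⟩ := exists_eq_mk g
    have hXY : ¬ (p ∣ X ∧ p ∣ Y) := by
      rw [← exists_pow_eq_mk_iff (dvd_pow_self p c.succ_ne_zero)
        (dvd_pow_self p (by omega : b ≠ 0))]
      exact (hG.isMaximalCyclic_zpowers_iff _).mp hH
    obtain ⟨k, hk, s, hs⟩ := exists_pow_eq_canonicalGenerator hb hXY
    exact ⟨s, (congrArg zpowers hs).symm.trans (hG.zpowers_pow_eq_self _ hk)⟩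

end CanonicalGenerator

theorem stmt1 {G : Type*} [Group G] {p a b : ℕ} (hp : p.Prime)
    (hab : a ≥ b) (hb : 1 ≤ b)
    (e : G ≃* Multiplicative (ZMod (p ^ a)) × Multiplicative (ZMod (p ^ b))) :
    {H : Subgroup G | IsMaximalCyclic H}.ncard =
      p ^ (b - 1) * ((a - b) * (p - 1) + p + 1) := by
  have : Fact p.Prime := ⟨hp⟩
  obtain ⟨c, rfl⟩ : ∃ c, a = c + 1 := ⟨a - 1, by omega⟩
  rw [ncard_setOf_isMaximalCyclic_congr e, ← range_zpowers_canonicalGenerator hb,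
    Set.ncard_range_of_injective (zpowers_canonicalGenerator_injective hb hab), Nat.card_sum,
    Nat.card_eq_fintype_card, Fintype.card_fin, Nat.card_eq_fintype_card, Fintype.card_coe,
    card_smallOrdCompl hp hb hab, Nat.totient_prime_pow hp (by omega : 0 < b)]
  obtain ⟨d, rfl⟩ : ∃ d, b = d + 1 := ⟨b - 1, by omega⟩
  simp only [Nat.add_sub_cancel, pow_succ]
  ring
end

section
/- Let G be a finite abelian noncyclic group of order p^n (p prime). Then the number of maximal cyclic subgroups of G is at least (p-1)(n-2) + p + 1, and hence at least n + 1. -/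
/-!
In a finite abelian `p`-group, `zpowers g` is a maximal cyclic subgroup exactly when `g` is not
a `p`-th power. If `G` has exponent `p`, each of the `p ^ n - 1` nontrivial elements generates a
maximal cyclic subgroup of order `p`, which gives at least `(p ^ n - 1) / (p - 1)` of them.
Otherwise pick a subgroup `N` of order `p` consisting of `p`-th powers. Then `G ⧸ N` is again
noncyclic (a generator of `G` modulo `p`-th powers generates `G`), and every maximal cyclic
subgroup of `G ⧸ N` is the image of one of `G`. Since `G` is not cyclic, some maximal cyclic
`zpowers g` misses `N`, and the `p` subgroups `zpowers (g * t)`, `t ∈ N`, are distinct maximal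
cyclic subgroups with the same image. Hence `η G ≥ η (G ⧸ N) - 1 + p`, and induction on `n`
concludes.
-/

open Subgroup

section Group

variable {G : Type*} [Group G]

theorem not_isMaximalCyclic_bot [Nontrivial G] : ¬ IsMaximalCyclic (⊥ : Subgroup G) := by
  rintro ⟨-, hmax⟩
  obtain ⟨g, hg⟩ := exists_ne (1 : G)
  exact hg (zpowers_eq_bot.1 (hmax (zpowers g) inferInstance bot_le).symm)

theorem exists_isMaximalCyclic_mem [Finite G] (g : G) :
    ∃ H : Subgroup G, IsMaximalCyclic H ∧ g ∈ H := by
  obtain ⟨H, ⟨hHc, hgH⟩, hmax⟩ := Set.Finite.exists_maximalFor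
    (fun K : Subgroup G ↦ Nat.card K) {K | IsCyclic K ∧ g ∈ K} (Set.toFinite _)
    ⟨zpowers g, inferInstance, mem_zpowers g⟩
  refine ⟨H, ⟨hHc, fun K hK hHK ↦ ?_⟩, hgH⟩
  exact eq_of_le_of_card_ge hHK (hmax ⟨hK, hHK hgH⟩ (card_le_of_le hHK))

theorem not_le_zpowers_mul {N : Subgroup G} {g t : G} (hg : IsMaximalCyclic (zpowers g))
    (hNg : ¬ N ≤ zpowers g) (ht : t ∈ N) : ¬ N ≤ zpowers (g * t) := by
  intro hN
  have hgt : g ∈ zpowers (g * t) := by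
    simpa using mul_mem (mem_zpowers (g * t)) (inv_mem (hN ht))
  exact hNg (hg.2 _ inferInstance (zpowers_le.2 hgt) ▸ hN)

variable {p : ℕ} [Fact p.Prime]

theorem zpowers_eq_of_card_eq_prime {N : Subgroup G} (hN : Nat.card N = p) {x : G} (hxN : x ∈ N)
    (hx : x ≠ 1) : zpowers x = N := by
  have htop := zpowers_eq_top_of_prime_card hN (g := ⟨x, hxN⟩) (by simpa using hx)
  simpa [MonoidHom.map_zpowers, ← MonoidHom.range_eq_map] using congrArg (map N.subtype) htop

theorem IsPGroup.exists_orderOf_eq_prime [Finite G] [Nontrivial G] (hG : IsPGroup p G) :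
    ∃ x : G, orderOf x = p :=
  exists_prime_orderOf_dvd_card' p (hG.card_eq_or_dvd.resolve_left Finite.one_lt_card.ne')

theorem IsPGroup.exists_le_card_eq_prime [Finite G] (hG : IsPGroup p G) {K : Subgroup G}
    (hK : K ≠ ⊥) : ∃ N ≤ K, Nat.card N = p := by
  have := (nontrivial_iff_ne_bot K).2 hK
  obtain ⟨x, hx⟩ := (hG.to_subgroup K).exists_orderOf_eq_prime
  exact ⟨zpowers (x : G), zpowers_le.2 x.2, by rw [Nat.card_zpowers, orderOf_coe, hx]⟩

end Group

theorem Set.ncard_add_ncard_inter_preimage_singleton_le {α β : Type*} {f : α → β} {s : Set α}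
    {t : Set β} (hs : s.Finite) (hf : Set.SurjOn f s t) (b : β) :
    t.ncard + (s ∩ f ⁻¹' {b}).ncard ≤ s.ncard + 1 := by
  have ht : t ⊆ insert b (f '' (s \ f ⁻¹' {b})) := by
    intro c hc
    obtain ⟨a, ha, rfl⟩ := hf hc
    by_cases hab : f a = b
    · exact Or.inl hab
    · exact Or.inr ⟨a, ⟨ha, hab⟩, rfl⟩
  have := (Set.ncard_le_ncard ht ((hs.sdiff.image f).insert b)).trans (Set.ncard_insert_le _ _)
  have := Set.ncard_image_le (f := f) (hs.sdiff (t := f ⁻¹' {b}))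
  have := Set.ncard_inter_add_ncard_sdiff_eq_ncard s (f ⁻¹' {b}) hs
  omega

theorem sub_one_mul_add_one_le_pow {p n : ℕ} (hp : 1 ≤ p) (hn : 2 ≤ n) :
    (p - 1) * ((p - 1) * (n - 2) + p + 1) + 1 ≤ p ^ n := by
  obtain ⟨a, rfl⟩ : ∃ a, p = 1 + a := ⟨p - 1, by omega⟩
  obtain ⟨b, rfl⟩ : ∃ b, n = b + 2 := ⟨n - 2, by omega⟩
  have hbern := one_add_mul_le_pow_of_sq_nonneg (Nat.zero_le (a ^ 2)) (Nat.zero_le _)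
    (Nat.zero_le _) b
  simp only [Nat.add_sub_cancel_left, Nat.add_sub_cancel, pow_add]
  calc a * (a * b + (1 + a) + 1) + 1 ≤ (1 + b * a) * (1 + a) ^ 2 := by
        ring_nf
        nlinarith [Nat.zero_le (a ^ 2 * b), Nat.zero_le (a * b)]
    _ ≤ (1 + a) ^ b * (1 + a) ^ 2 := Nat.mul_le_mul_right _ hbern

section CommGroup

variable {G : Type*} [CommGroup G] {p : ℕ}

theorem mk_mem_range_powMonoidHom_iff {N : Subgroup G}
    (hN : N ≤ (powMonoidHom p : G →* G).range) {g : G} :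
    (g : G ⧸ N) ∈ (powMonoidHom p : G ⧸ N →* G ⧸ N).range ↔
      g ∈ (powMonoidHom p : G →* G).range := by
  constructor
  · rintro ⟨q, hq⟩
    obtain ⟨h, rfl⟩ := QuotientGroup.mk_surjective q
    obtain ⟨c, hc⟩ := hN ((QuotientGroup.eq (s := N)).1 hq)
    refine ⟨h * c, ?_⟩
    simp only [powMonoidHom_apply] at hc ⊢
    rw [mul_pow, hc]
    group
  · rintro ⟨h, rfl⟩
    exact ⟨h, rfl⟩

variable [Fact p.Prime]

theorem IsCyclic.eq_of_card_eq_prime [IsCyclic G] [Finite G] {A B : Subgroup G}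
    (hA : Nat.card A = p) (hB : Nat.card B = p) : A = B := by
  have hker : ∀ C : Subgroup G, Nat.card C = p → C = (powMonoidHom p : G →* G).ker := by
    intro C hC
    refine eq_of_le_of_card_ge (fun c hc ↦ ?_) ?_
    · simpa [hC] using congrArg Subtype.val (pow_card_eq_one' (x := (⟨c, hc⟩ : C)))
    · rw [IsCyclic.card_powMonoidHom_ker, hC]
      exact Nat.gcd_le_right _ (Fact.out : p.Prime).pos
  rw [hker A hA, hker B hB]

theorem IsCyclic.eq_of_le_of_card_eq_prime {H A B : Subgroup G} [IsCyclic H] [Finite H]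
    (hAH : A ≤ H) (hBH : B ≤ H) (hA : Nat.card A = p) (hB : Nat.card B = p) : A = B := by
  have hsub : A.subgroupOf H = B.subgroupOf H := IsCyclic.eq_of_card_eq_prime
    ((Nat.card_congr (subgroupOfEquivOfLe hAH).toEquiv).trans hA)
    ((Nat.card_congr (subgroupOfEquivOfLe hBH).toEquiv).trans hB)
  rwa [subgroupOf_inj, inf_of_le_left hAH, inf_of_le_left hBH] at hsub

namespace IsPGroup

theorem isMaximalCyclic_zpowers (hG : IsPGroup p G) {g : G}
    (hg : g ∉ (powMonoidHom p : G →* G).range) : IsMaximalCyclic (zpowers g) := by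
  refine ⟨inferInstance, fun K hK hgK ↦ ?_⟩
  obtain ⟨k, rfl⟩ := (K.isCyclic_iff_exists_zpowers_eq_top).1 hK
  obtain ⟨t, rfl⟩ := mem_zpowers_iff.1 (hgK (mem_zpowers g))
  refine le_antisymm hgK (zpowers_le.2 (mem_zpowers_zpow_iff.2 ?_))
  obtain ⟨s, hs⟩ := (IsPGroup.iff_orderOf.1 hG) k
  have hpt : ¬ (p : ℤ) ∣ t := by
    rintro ⟨u, rfl⟩
    exact hg ⟨k ^ u, by simp [← zpow_natCast, ← zpow_mul, mul_comm]⟩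
  rw [hs, Int.gcd_eq_natAbs, Int.natAbs_natCast]
  exact Nat.Coprime.pow_right s
    ((Nat.Prime.coprime_iff_not_dvd Fact.out).2 (Int.natCast_dvd.not.1 hpt)).symm

theorem notMem_range_of_isMaximalCyclic_zpowers [Nontrivial G] (hG : IsPGroup p G) {g : G}
    (hg : IsMaximalCyclic (zpowers g)) : g ∉ (powMonoidHom p : G →* G).range := by
  rintro ⟨h, rfl⟩
  have hh : h ∈ zpowers (h ^ p) :=
    hg.2 _ inferInstance (zpowers_le.2 (pow_mem (mem_zpowers h) p)) ▸ mem_zpowers h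
  rw [mem_zpowers_pow_iff] at hh
  have h1 : h = 1 := by
    by_contra h1
    rw [Nat.gcd_eq_left (hG.dvd_orderOf h1)] at hh
    exact (Fact.out : p.Prime).ne_one hh
  simp only [powMonoidHom_apply, h1, one_pow, zpowers_one_eq_bot] at hg
  exact not_isMaximalCyclic_bot hg

theorem subsingleton_of_surjective_powMonoidHom [Finite G] (hG : IsPGroup p G)
    (hsurj : Function.Surjective (powMonoidHom p : G →* G)) : Subsingleton G := by
  by_contra hnt
  rw [not_subsingleton_iff_nontrivial] at hnt
  obtain ⟨x, hx⟩ := hG.exists_orderOf_eq_prime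
  have hx1 : x = 1 := Finite.injective_iff_surjective.2 hsurj <| by
    simp [← hx, pow_orderOf_eq_one]
  exact (Fact.out : p.Prime).ne_one (hx ▸ hx1 ▸ orderOf_one)

theorem isCyclic_of_isCyclic_quotient [Finite G] (hG : IsPGroup p G) {N : Subgroup G}
    (hN : N ≤ (powMonoidHom p : G →* G).range) [IsCyclic (G ⧸ N)] : IsCyclic G := by
  obtain ⟨q, hq⟩ := IsCyclic.exists_generator (α := G ⧸ N)
  obtain ⟨g, rfl⟩ := QuotientGroup.mk_surjective q
  have hsurj : Function.Surjective (powMonoidHom p : G ⧸ zpowers g →* G ⧸ zpowers g) := by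
    intro x
    obtain ⟨x, rfl⟩ := QuotientGroup.mk_surjective x
    obtain ⟨a, ha⟩ := mem_zpowers_iff.1 (hq x)
    obtain ⟨c, hc⟩ := hN ((QuotientGroup.eq (s := N)).1 ha)
    refine ⟨c, (QuotientGroup.eq (s := zpowers g)).2 ?_⟩
    simp only [powMonoidHom_apply] at hc ⊢
    rw [hc]
    simp
  have := (hG.to_quotient (zpowers g)).subsingleton_of_surjective_powMonoidHom hsurj
  exact isCyclic_iff_exists_zpowers_eq_top.2
    ⟨g, index_eq_one.1 (Nat.card_eq_one_iff_unique.2 ⟨this, inferInstance⟩)⟩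

theorem isCyclic_of_card_ker_powMonoidHom_le [Finite G] (hG : IsPGroup p G)
    (hker : Nat.card (powMonoidHom p : G →* G).ker ≤ p) : IsCyclic G := by
  have hQ : Nat.card (G ⧸ (powMonoidHom p : G →* G).range) ∣ p := by
    rw [← Subgroup.index, index_range]
    rcases (hG.to_subgroup (powMonoidHom p : G →* G).ker).card_eq_or_dvd with h | h
    · rw [h]
      exact one_dvd p
    · rw [Nat.le_antisymm hker (Nat.le_of_dvd Nat.card_pos h)]
  have := isCyclic_of_card_dvd_prime hQ
  exact hG.isCyclic_of_isCyclic_quotient le_rfl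

theorem exists_isMaximalCyclic_not_le [Finite G] (hG : IsPGroup p G) (hnc : ¬ IsCyclic G)
    {N : Subgroup G} (hN : Nat.card N = p) :
    ∃ H : Subgroup G, IsMaximalCyclic H ∧ ¬ N ≤ H := by
  by_contra! hle
  refine hnc (hG.isCyclic_of_card_ker_powMonoidHom_le
    ((card_le_of_le fun x hx ↦ ?_).trans hN.le))
  rcases eq_or_ne x 1 with rfl | hx1
  · exact one_mem N
  obtain ⟨H, hH, hxH⟩ := exists_isMaximalCyclic_mem x
  have : IsCyclic H := hH.1
  have hxp : orderOf x = p := orderOf_eq_prime (by simpa using hx) hx1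
  rw [← IsCyclic.eq_of_le_of_card_eq_prime (zpowers_le.2 hxH) (hle H hH)
    (by rw [Nat.card_zpowers, hxp]) hN]
  exact mem_zpowers x

variable {N : Subgroup G}

theorem surjOn_map_mk_isMaximalCyclic [Nontrivial (G ⧸ N)] (hG : IsPGroup p G)
    (hN : N ≤ (powMonoidHom p : G →* G).range) :
    Set.SurjOn (Subgroup.map (QuotientGroup.mk' N)) {H | IsMaximalCyclic H}
      {C | IsMaximalCyclic C} := by
  intro C hC
  obtain ⟨c, rfl⟩ := (C.isCyclic_iff_exists_zpowers_eq_top).1 hC.1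
  obtain ⟨g, rfl⟩ := QuotientGroup.mk_surjective c
  have hg := (mk_mem_range_powMonoidHom_iff hN).not.1
    ((hG.to_quotient N).notMem_range_of_isMaximalCyclic_zpowers hC)
  exact ⟨zpowers g, hG.isMaximalCyclic_zpowers hg, MonoidHom.map_zpowers _ _⟩

theorem card_le_ncard_isMaximalCyclic_map_eq [Finite G] (hG : IsPGroup p G)
    (hN : N ≤ (powMonoidHom p : G →* G).range) (hNp : Nat.card N = p) {g : G}
    (hg : g ∉ (powMonoidHom p : G →* G).range) (hNg : ¬ N ≤ zpowers g) :
    p ≤ ({H | IsMaximalCyclic H} ∩ Subgroup.map (QuotientGroup.mk' N) ⁻¹'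
      {Subgroup.map (QuotientGroup.mk' N) (zpowers g)}).ncard := by
  have hgt : ∀ t ∈ N, g * t ∉ (powMonoidHom p : G →* G).range := fun t ht hgt ↦
    hg (by simpa using mul_mem hgt (inv_mem (hN ht)))
  rw [← hNp, ← SetLike.coe_sort_coe, Nat.card_coe_set_eq]
  refine Set.ncard_le_ncard_of_injOn (fun t ↦ zpowers (g * t)) (fun t ht ↦ ⟨?_, ?_⟩) ?_
  · exact hG.isMaximalCyclic_zpowers (hgt t ht)
  · simp [MonoidHom.map_zpowers, (QuotientGroup.eq_one_iff t).2 ht]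
  · intro t ht t' ht' htt'
    by_contra hne
    have hmem : t⁻¹ * t' ∈ zpowers (g * t) := by
      have hgt' : g * t' ∈ zpowers (g * t) := by
        simp only at htt'
        exact htt' ▸ mem_zpowers (g * t')
      simpa using mul_mem (inv_mem (mem_zpowers (g * t))) hgt'
    refine not_le_zpowers_mul (hG.isMaximalCyclic_zpowers hg) hNg ht ?_
    rw [← zpowers_eq_of_card_eq_prime hNp (mul_mem (inv_mem ht) ht') ?_]
    · exact zpowers_le.2 hmem
    · rwa [Ne, inv_mul_eq_one]

theorem ncard_isMaximalCyclic_quotient_add_le [Finite G] (hG : IsPGroup p G)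
    (hnc : ¬ IsCyclic G) (hN : N ≤ (powMonoidHom p : G →* G).range) (hNp : Nat.card N = p) :
    {C : Subgroup (G ⧸ N) | IsMaximalCyclic C}.ncard + p ≤
      {H : Subgroup G | IsMaximalCyclic H}.ncard + 1 := by
  have : Nontrivial G := not_subsingleton_iff_nontrivial.1 fun _ ↦ hnc inferInstance
  have : Nontrivial (G ⧸ N) := not_subsingleton_iff_nontrivial.1 fun _ ↦
    hnc (hG.isCyclic_of_isCyclic_quotient hN)
  obtain ⟨H, hH, hNH⟩ := hG.exists_isMaximalCyclic_not_le hnc hNp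
  obtain ⟨g, rfl⟩ := (H.isCyclic_iff_exists_zpowers_eq_top).1 hH.1
  have hg := hG.notMem_range_of_isMaximalCyclic_zpowers hH
  have hfiber := hG.card_le_ncard_isMaximalCyclic_map_eq hN hNp hg hNH
  have hcount := Set.ncard_add_ncard_inter_preimage_singleton_le (Set.toFinite _)
    (hG.surjOn_map_mk_isMaximalCyclic hN) (Subgroup.map (QuotientGroup.mk' N) (zpowers g))
  omega

end IsPGroup

theorem card_le_sub_one_mul_ncard_isMaximalCyclic_add_one [Finite G]
    (hexp : ∀ x : G, x ^ p = 1) :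
    Nat.card G ≤ (p - 1) * {H : Subgroup G | IsMaximalCyclic H}.ncard + 1 := by
  classical
  have := Fintype.ofFinite G
  have hG : IsPGroup p G := fun x ↦ ⟨1, by simpa using hexp x⟩
  set s : Finset G := Finset.univ.erase 1
  have hfiber : ∀ H ∈ s.image zpowers, {x ∈ s | zpowers x = H}.card ≤ p - 1 := by
    intro H hH
    obtain ⟨a, ha, rfl⟩ := Finset.mem_image.1 hH
    calc {x ∈ s | zpowers x = zpowers a}.card
        ≤ ((zpowers a : Set G).toFinset.erase 1).card := by
          refine Finset.card_le_card fun x hx ↦ ?_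
          obtain ⟨hxs, hxa⟩ := Finset.mem_filter.1 hx
          simpa [← hxa] using Finset.ne_of_mem_erase hxs
      _ = p - 1 := by
          rw [Finset.card_erase_of_mem (by simp), Set.toFinset_card, ← Nat.card_eq_fintype_card,
            SetLike.coe_sort_coe, Nat.card_zpowers,
            orderOf_eq_prime (hexp a) (Finset.ne_of_mem_erase ha)]
  have himage : ↑(s.image zpowers) ⊆ {H : Subgroup G | IsMaximalCyclic H} := by
    intro H hH
    obtain ⟨a, ha, rfl⟩ := Finset.mem_image.1 hH
    refine hG.isMaximalCyclic_zpowers fun ⟨h, hh⟩ ↦ Finset.ne_of_mem_erase ha ?_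
    simpa [hexp h] using hh.symm
  calc Nat.card G = s.card + 1 := by
        rw [Finset.card_erase_of_mem (Finset.mem_univ 1), Finset.card_univ,
          Nat.card_eq_fintype_card]
        have := Fintype.card_pos (α := G)
        omega
    _ ≤ (p - 1) * (s.image zpowers).card + 1 := by
        gcongr
        exact Finset.card_le_mul_card_image s (p - 1) hfiber
    _ ≤ (p - 1) * {H : Subgroup G | IsMaximalCyclic H}.ncard + 1 := by
        gcongr
        rw [← Set.ncard_coe_finset]
        exact Set.ncard_le_ncard himage

theorem le_ncard_isMaximalCyclic [Finite G] {n : ℕ} (hG : Nat.card G = p ^ n)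
    (hnc : ¬ IsCyclic G) :
    (p - 1) * (n - 2) + p + 1 ≤ {H : Subgroup G | IsMaximalCyclic H}.ncard := by
  have hp : p.Prime := Fact.out
  induction n generalizing G with
  | zero => exact absurd (isCyclic_of_card_dvd_prime (p := p) (by simp [hG])) hnc
  | succ n ih =>
    have hpG : IsPGroup p G := IsPGroup.of_card hG
    by_cases hexp : ∀ x : G, x ^ p = 1
    · have hn : 1 ≤ n := by
        rcases n with _ | n
        · exact absurd (isCyclic_of_prime_card (by simpa using hG)) hnc
        · omega
      have hcard := card_le_sub_one_mul_ncard_isMaximalCyclic_add_one hexp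
      have hpow := sub_one_mul_add_one_le_pow hp.one_le (show 2 ≤ n + 1 by omega)
      rw [hG] at hcard
      exact Nat.le_of_mul_le_mul_left (by omega) (Nat.sub_pos_of_lt hp.one_lt)
    · push Not at hexp
      obtain ⟨x, hx⟩ := hexp
      have hR : (powMonoidHom p : G →* G).range ≠ ⊥ :=
        ne_bot_iff_exists_ne_one.2 ⟨⟨x ^ p, x, rfl⟩, fun h ↦ hx (congrArg Subtype.val h)⟩
      obtain ⟨N, hNR, hNp⟩ := hpG.exists_le_card_eq_prime hR
      have hQ : Nat.card (G ⧸ N) = p ^ n := by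
        have := card_eq_card_quotient_mul_card_subgroup N
        rw [hG, hNp, pow_succ] at this
        exact (Nat.eq_of_mul_eq_mul_right hp.pos this).symm
      have hQη : (p - 1) * (n - 2) + p + 1 ≤
          {C : Subgroup (G ⧸ N) | IsMaximalCyclic C}.ncard :=
        ih hQ fun _ ↦ hnc (hpG.isCyclic_of_isCyclic_quotient hNR)
      have hstep := hpG.ncard_isMaximalCyclic_quotient_add_le hnc hNR hNp
      have : (p - 1) * (n + 1 - 2) ≤ (p - 1) * (n - 2) + (p - 1) := by
        rw [← Nat.mul_succ]
        exact Nat.mul_le_mul_left _ (by omega)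
      have := hp.pos
      omega

end CommGroup

theorem stmt6 {G : Type*} [CommGroup G] [Finite G] {p n : ℕ} (hp : p.Prime)
    (hG : Nat.card G = p ^ n) (hnc : ¬ IsCyclic G) :
    {H : Subgroup G | IsMaximalCyclic H}.ncard ≥ (p - 1) * (n - 2) + p + 1 ∧
      {H : Subgroup G | IsMaximalCyclic H}.ncard ≥ n + 1 := by
  have := Fact.mk hp
  have hη := le_ncard_isMaximalCyclic hG hnc
  refine ⟨hη, le_trans ?_ hη⟩
  have := Nat.le_mul_of_pos_left (n - 2) (Nat.sub_pos_of_lt hp.one_lt)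
  have := hp.two_le
  omega
end

section
/- Let p be an odd prime and G a finite abelian noncyclic group of order p^n. Then the number of maximal cyclic subgroups of G is at least ((p+1)/2)·n. -/
/-!
Write `Ω k = {g | g ^ p ^ k = 1}` and `|Ω k| = p ^ S k`. If `g` is not a `p`-th power, then
`zpowers g` is maximal cyclic; a maximal cyclic subgroup of order `p ^ (k + 1)` has
`φ (p ^ (k + 1)) = p ^ k (p - 1)` generators, so `η(G) ≥ ∑ₖ x k / (p ^ k (p - 1))`, where
`x k` counts the non-`p`-th powers of order `p ^ (k + 1)`. The `p`-th power map sends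
`Ω (k + 1)` onto `Ω k ∩ G ^ p` with kernel `Ω 1`, which expresses `x k` through the `|Ω k|`
alone. With `d = S 1`, which is at least `2` as `G` is not cyclic, the sum telescopes to
`(p ^ d - 1) / (p - 1) + (1 - p / p ^ d) ∑_{k ≥ 1} (p ^ S (k + 1) - p ^ S k) / (p ^ k (p - 1))`.
The first term is at least `(p + 1) d / 2`. Whenever `Ω k < Ω (k + 1)`, the group
`Ω (k - 1) ∩ G ^ p` contains an element of order `p ^ (k - 1)`, so `S k ≥ d + k - 1`, and then
the `k`-th term is at least `(p + 1) (S (k + 1) - S k) / 2`. These bounds add up to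
`(p + 1) n / 2`.
-/

open Finset Subgroup

def powTorsion (G : Type*) [CommGroup G] (m : ℕ) : Subgroup G := (powMonoidHom m : G →* G).ker

section PowTorsion

variable {G : Type*} [CommGroup G]

@[simp]
lemma mem_powTorsion {m : ℕ} {g : G} : g ∈ powTorsion G m ↔ g ^ m = 1 := Iff.rfl

lemma powTorsion_one : powTorsion G 1 = ⊥ := by
  ext g
  simp

lemma powTorsion_mono {m l : ℕ} (h : m ∣ l) : powTorsion G m ≤ powTorsion G l := by
  obtain ⟨c, rfl⟩ := h
  intro g hg
  simp_all [pow_mul]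

lemma powTorsion_eq_top {m : ℕ} (h : Nat.card G ∣ m) : powTorsion G m = ⊤ := by
  obtain ⟨c, rfl⟩ := h
  ext g
  simp [pow_mul, pow_card_eq_one']

lemma map_powMonoidHom_powTorsion_mul (m l : ℕ) :
    (powTorsion G (m * l)).map (powMonoidHom m) = powTorsion G l ⊓ (powMonoidHom m).range := by
  ext y
  constructor
  · rintro ⟨x, hx, rfl⟩
    exact ⟨by simpa [← pow_mul] using hx, x, rfl⟩
  · rintro ⟨hy, x, rfl⟩
    exact ⟨x, by simpa [pow_mul] using hy, rfl⟩

lemma card_powTorsion_mul (m l : ℕ) :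
    Nat.card (powTorsion G (m * l)) =
      Nat.card (powTorsion G m) *
        Nat.card (powTorsion G l ⊓ (powMonoidHom m).range : Subgroup G) := by
  rw [← map_powMonoidHom_powTorsion_mul, ← relIndex_ker, ← card_mul_index,
    Nat.card_congr (subgroupOfEquivOfLe (powTorsion_mono (dvd_mul_right m l))).toEquiv]
  rfl

lemma card_powTorsion_pow_le [Finite G] {p : ℕ} (h : Nat.card (powTorsion G p) ≤ p) (k : ℕ) :
    Nat.card (powTorsion G (p ^ k)) ≤ p ^ k := by
  induction k with
  | zero => simp [powTorsion_one]
  | succ k ih =>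
    rw [pow_succ', card_powTorsion_mul]
    exact Nat.mul_le_mul h ((card_le_of_le inf_le_left).trans ih)

lemma isCyclic_of_card_powTorsion_le [Finite G] {p : ℕ} [Fact p.Prime] (hG : IsPGroup p G)
    (h : Nat.card (powTorsion G p) ≤ p) : IsCyclic G := by
  obtain ⟨e, he⟩ := isPGroup_iff_exponent_eq_pow.mp hG
  apply IsCyclic.of_exponent_eq_card
  refine le_antisymm (Nat.le_of_dvd Nat.card_pos Group.exponent_dvd_nat_card) ?_
  have htop : powTorsion G (p ^ e) = ⊤ := by
    ext g
    simp [← he, Monoid.pow_exponent_eq_one]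
  calc Nat.card G = Nat.card (powTorsion G (p ^ e)) := by rw [htop, card_top]
    _ ≤ p ^ e := card_powTorsion_pow_le h e
    _ = _ := he.symm

lemma orderOf_eq_prime_pow_succ_iff {p k : ℕ} [hp : Fact p.Prime] {g : G} :
    orderOf g = p ^ (k + 1) ↔ g ^ p ^ (k + 1) = 1 ∧ g ^ p ^ k ≠ 1 := by
  refine ⟨fun h => ⟨h ▸ pow_orderOf_eq_one g,
    pow_ne_one_of_lt_orderOf (by simp [hp.out.ne_zero]) ?_⟩, fun h => orderOf_eq_prime_pow h.2 h.1⟩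
  rw [h]
  exact Nat.pow_lt_pow_right hp.out.one_lt (by omega)

lemma ncard_orderOf_eq_add_card_powTorsion_inf [Finite G] {p : ℕ} [Fact p.Prime]
    (H : Subgroup G) (k : ℕ) :
    {g | g ∈ H ∧ orderOf g = p ^ (k + 1)}.ncard +
        Nat.card (powTorsion G (p ^ k) ⊓ H : Subgroup G) =
      Nat.card (powTorsion G (p ^ (k + 1)) ⊓ H : Subgroup G) := by
  have hsub : ((powTorsion G (p ^ k) ⊓ H : Subgroup G) : Set G) ⊆
      powTorsion G (p ^ (k + 1)) ⊓ H :=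
    inf_le_inf_right H (powTorsion_mono (pow_dvd_pow p k.le_succ))
  have hdiff : ((powTorsion G (p ^ (k + 1)) ⊓ H : Subgroup G) : Set G) \
      (powTorsion G (p ^ k) ⊓ H) = {g | g ∈ H ∧ orderOf g = p ^ (k + 1)} := by
    ext g
    simp only [coe_inf, Set.inf_eq_inter, Set.mem_sdiff, Set.mem_inter_iff, SetLike.mem_coe,
      mem_powTorsion, Set.mem_ofPred_eq, orderOf_eq_prime_pow_succ_iff]
    tauto
  have hcard (K : Subgroup G) : Nat.card K = (K : Set G).ncard := Nat.card_coe_set_eq (K : Set G)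
  rw [hcard, hcard, ← hdiff]
  exact Set.ncard_sdiff_add_ncard_of_subset hsub

end PowTorsion

section MaximalCyclic

variable {G : Type*}

/-- If `g = h ^ m` and `p ∤ m`, then `g` and `h` have the same order, so `zpowers h = zpowers g`. -/
lemma isMaximalCyclic_zpowers_of_notMem_range [CommGroup G] [Finite G] {p : ℕ}
    [hp : Fact p.Prime] (hG : IsPGroup p G) {g : G} (hg : g ∉ (powMonoidHom p : G →* G).range) :
    IsMaximalCyclic (zpowers g) := by
  refine ⟨inferInstance, fun K hK hle => ?_⟩
  obtain ⟨h, rfl⟩ := K.isCyclic_iff_exists_zpowers_eq_top.mp hK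
  obtain ⟨m, rfl⟩ : ∃ m : ℕ, h ^ m = g :=
    (isOfFinOrder_of_finite h).mem_powers_iff_mem_zpowers.mpr (hle (mem_zpowers g))
  have hpm : ¬p ∣ m := by
    rintro ⟨c, rfl⟩
    exact hg ⟨h ^ c, by simp [← pow_mul, mul_comm]⟩
  have hord : orderOf (h ^ m) = orderOf h :=
    (hG.orderOf_coprime (hp.out.coprime_iff_not_dvd.mpr hpm) h).orderOf_pow
  exact eq_of_le_of_card_ge hle (by rw [Nat.card_zpowers, Nat.card_zpowers, hord])

lemma ncard_isMaximalCyclic_zpowers_le [Group G] [Finite G] (d : ℕ) :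
    {g : G | IsMaximalCyclic (zpowers g) ∧ orderOf g = d}.ncard ≤
      d.totient * {H : Subgroup G | IsMaximalCyclic H ∧ Nat.card H = d}.ncard := by
  classical
  have := Fintype.ofFinite G
  have := Fintype.ofFinite (Subgroup G)
  simp only [Set.ncard_eq_toFinset_card', Set.toFinset_ofPred]
  refine card_le_mul_card_image_of_maps_to (f := zpowers) ?_ _ ?_
  · intro g hg
    simp only [mem_filter, mem_univ, true_and] at hg ⊢
    exact ⟨hg.1, by rw [Nat.card_zpowers, hg.2]⟩
  · intro H hH
    simp only [mem_filter, mem_univ, true_and] at hH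
    have : IsCyclic H := hH.1.1
    calc #{g ∈ {g : G | IsMaximalCyclic (zpowers g) ∧ orderOf g = d} | zpowers g = H}
        ≤ #(({a : H | orderOf a = d} : Finset H).image Subtype.val) := by
          refine card_le_card fun g hg => ?_
          simp only [mem_filter, mem_univ, true_and] at hg
          exact mem_image.mpr ⟨⟨g, hg.2 ▸ mem_zpowers g⟩, by simp [hg.1.2], rfl⟩
      _ ≤ #({a : H | orderOf a = d} : Finset H) := card_image_le
      _ = d.totient :=
          IsCyclic.card_orderOf_eq_totient (by rw [← Nat.card_eq_fintype_card, hH.2])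

lemma sum_ncard_card_eq_pow_succ_le [Group G] [Finite G] {p : ℕ} (hp : 2 ≤ p)
    (P : Subgroup G → Prop) (n : ℕ) :
    ∑ k ∈ range n, {H : Subgroup G | P H ∧ Nat.card H = p ^ (k + 1)}.ncard ≤
      {H : Subgroup G | P H}.ncard := by
  classical
  have := Fintype.ofFinite (Subgroup G)
  have hinj : Set.InjOn (fun k => p ^ (k + 1)) (range n) := fun k _ l _ h =>
    Nat.succ_injective (Nat.pow_right_injective hp h)
  simp only [Set.ncard_eq_toFinset_card', Set.toFinset_ofPred]
  calc ∑ k ∈ range n, #{H : Subgroup G | P H ∧ Nat.card H = p ^ (k + 1)}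
      = ∑ c ∈ (range n).image (fun k => p ^ (k + 1)),
          #{H ∈ univ.filter P | Nat.card (H : Subgroup G) = c} := by
        rw [sum_image hinj]
        simp only [filter_filter]
    _ = #{H ∈ univ.filter P |
          Nat.card (H : Subgroup G) ∈ (range n).image (fun k => p ^ (k + 1))} :=
        sum_card_fiberwise_eq_card_filter _ _ _
    _ ≤ _ := card_filter_le _ _

end MaximalCyclic

section Layers

variable {G : Type*} [CommGroup G] [Finite G] {p : ℕ} [hp : Fact p.Prime]

lemma ncard_notMem_range_orderOf_eq (k : ℕ) :
    ({g : G | g ∉ (powMonoidHom p : G →* G).range ∧ orderOf g = p ^ (k + 1)}.ncard : ℝ) =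
      (Nat.card (powTorsion G (p ^ (k + 1))) - Nat.card (powTorsion G (p ^ k))) -
        (Nat.card (powTorsion G (p ^ (k + 2))) - Nat.card (powTorsion G (p ^ (k + 1)))) /
          Nat.card (powTorsion G p) := by
  have hk1 := card_powTorsion_mul (G := G) p (p ^ k)
  have hk2 := card_powTorsion_mul (G := G) p (p ^ (k + 1))
  set R := (powMonoidHom p : G →* G).range
  have hsplit : {g : G | g ∉ R ∧ orderOf g = p ^ (k + 1)}.ncard +
      {g | g ∈ R ∧ orderOf g = p ^ (k + 1)}.ncard =
        {g | g ∈ (⊤ : Subgroup G) ∧ orderOf g = p ^ (k + 1)}.ncard := by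
    rw [add_comm, ← Set.ncard_inter_add_ncard_sdiff_eq_ncard
      {g : G | g ∈ (⊤ : Subgroup G) ∧ orderOf g = p ^ (k + 1)} R]
    congr 2 <;> ext g <;> simp [and_comm]
  have htop := ncard_orderOf_eq_add_card_powTorsion_inf (p := p) (⊤ : Subgroup G) k
  have hR := ncard_orderOf_eq_add_card_powTorsion_inf (p := p) R k
  simp only [inf_top_eq] at htop
  simp only [← pow_succ'] at hk1 hk2
  have hpos : (0 : ℝ) < Nat.card (powTorsion G p) := by exact_mod_cast Nat.card_pos
  have hquot : ((Nat.card (powTorsion G (p ^ (k + 2))) : ℝ) -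
      Nat.card (powTorsion G (p ^ (k + 1)))) / Nat.card (powTorsion G p) =
        Nat.card (powTorsion G (p ^ (k + 1)) ⊓ R : Subgroup G) -
          Nat.card (powTorsion G (p ^ k) ⊓ R : Subgroup G) := by
    rw [hk1, hk2]
    push_cast
    field_simp
  rw [hquot]
  have hsplit' := congrArg (Nat.cast : ℕ → ℝ) hsplit
  have htop' := congrArg (Nat.cast : ℕ → ℝ) htop
  have hR' := congrArg (Nat.cast : ℕ → ℝ) hR
  push_cast at hsplit' htop' hR'
  linarith

lemma ncard_notMem_range_orderOf_le (hG : IsPGroup p G) (k : ℕ) :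
    {g : G | g ∉ (powMonoidHom p : G →* G).range ∧ orderOf g = p ^ (k + 1)}.ncard ≤
      p ^ k * (p - 1) * {H : Subgroup G | IsMaximalCyclic H ∧ Nat.card H = p ^ (k + 1)}.ncard := by
  rw [← Nat.totient_prime_pow_succ hp.out]
  refine (Set.ncard_le_ncard fun g hg => ?_).trans (ncard_isMaximalCyclic_zpowers_le _)
  exact ⟨isMaximalCyclic_zpowers_of_notMem_range hG hg.1, hg.2⟩

lemma card_powTorsion_mul_pow_le_of_lt {j : ℕ}
    (h : Nat.card (powTorsion G (p ^ (j + 1))) < Nat.card (powTorsion G (p ^ (j + 2)))) :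
    Nat.card (powTorsion G p) * p ^ j ≤ Nat.card (powTorsion G (p ^ (j + 1))) := by
  obtain ⟨g, hg2, hg1⟩ := SetLike.exists_of_lt (lt_of_le_of_ne
    (powTorsion_mono (pow_dvd_pow p (j + 1).le_succ)) fun he => h.ne (by rw [he]))
  have hord : orderOf g = p ^ (j + 2) := orderOf_eq_prime_pow hg1 hg2
  have hy : orderOf (g ^ p ^ 2) = p ^ j := by
    rw [orderOf_pow_of_dvd (by simp [hp.out.ne_zero]) (hord ▸ pow_dvd_pow p (by omega)), hord,
      Nat.pow_div (by omega) hp.out.pos]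
    rfl
  have hmem : g ^ p ^ 2 ∈ powTorsion G (p ^ j) ⊓ (powMonoidHom p : G →* G).range :=
    ⟨by simp [← hy, pow_orderOf_eq_one], g ^ p, by simp [← pow_mul, sq]⟩
  rw [pow_succ', card_powTorsion_mul]
  gcongr
  calc p ^ j = Nat.card (zpowers (g ^ p ^ 2)) := by rw [Nat.card_zpowers, hy]
    _ ≤ _ := card_le_of_le (zpowers_le.mpr hmem)

lemma sum_layers_le_ncard_isMaximalCyclic (hG : IsPGroup p G) {S : ℕ → ℕ}
    (hS : ∀ k, Nat.card (powTorsion G (p ^ k)) = p ^ S k) (n : ℕ) :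
    ∑ k ∈ range n, (((p : ℝ) ^ S (k + 1) - p ^ S k) -
        (p ^ S (k + 2) - p ^ S (k + 1)) / p ^ S 1) / (p ^ k * (p - 1)) ≤
      {H : Subgroup G | IsMaximalCyclic H}.ncard := by
  have hp1 : 1 < p := hp.out.one_lt
  have hp1' : (1 : ℝ) < p := by exact_mod_cast hp1
  have hN (k : ℕ) : (p : ℝ) ^ S k = Nat.card (powTorsion G (p ^ k)) := by
    rw [hS]
    push_cast
    rfl
  simp only [hN, pow_one, ← ncard_notMem_range_orderOf_eq]
  calc _ ≤ ∑ k ∈ range n,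
        ({H : Subgroup G | IsMaximalCyclic H ∧ Nat.card H = p ^ (k + 1)}.ncard : ℝ) := by
        refine sum_le_sum fun k _ => ?_
        rw [div_le_iff₀ (mul_pos (pow_pos (by linarith) k) (by linarith))]
        have hcount := ncard_notMem_range_orderOf_le hG k
        calc _ ≤ ((p ^ k * (p - 1) * {H : Subgroup G | IsMaximalCyclic H ∧
              Nat.card H = p ^ (k + 1)}.ncard : ℕ) : ℝ) := by exact_mod_cast hcount
          _ = _ := by
            push_cast [Nat.cast_sub hp1.le]
            ring
    _ ≤ _ := by exact_mod_cast sum_ncard_card_eq_pow_succ_le hp.out.two_le _ n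

lemma exists_card_powTorsion_eq_pow {n : ℕ} (hG : Nat.card G = p ^ n) (hnc : ¬IsCyclic G) :
    ∃ S : ℕ → ℕ, (∀ k, Nat.card (powTorsion G (p ^ k)) = p ^ S k) ∧ S 0 = 0 ∧ 2 ≤ S 1 ∧
      S n = n ∧ S (n + 1) = n ∧ Monotone S ∧
      ∀ j, S (j + 1) < S (j + 2) → S 1 + j ≤ S (j + 1) := by
  have hPG := IsPGroup.of_card hG
  choose S hS using fun k => IsPGroup.iff_card.mp (hPG.to_subgroup (powTorsion G (p ^ k)))
  have hp1 := hp.out.one_lt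
  have hinj : Function.Injective (p ^ · : ℕ → ℕ) := Nat.pow_right_injective hp.out.two_le
  have htop {k : ℕ} (hk : n ≤ k) : S k = n :=
    hinj (by simp only [← hS, powTorsion_eq_top (hG ▸ pow_dvd_pow p hk), card_top, hG])
  refine ⟨S, hS, hinj (by simp [← hS, powTorsion_one]), ?_, htop le_rfl, htop n.le_succ,
    monotone_nat_of_le_succ fun k => ?_, fun j hj => ?_⟩
  · by_contra h
    have hS1 := hS 1
    rw [pow_one] at hS1
    refine hnc (isCyclic_of_card_powTorsion_le hPG ?_)
    rw [hS1]
    exact (Nat.pow_le_pow_right hp1.le (by omega)).trans_eq (pow_one p)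
  · rw [← Nat.pow_le_pow_iff_right hp1, ← hS, ← hS]
    exact card_le_of_le (powTorsion_mono (pow_dvd_pow p k.le_succ))
  · rw [← Nat.pow_le_pow_iff_right hp1, pow_add, ← hS (j + 1), ← hS 1, pow_one]
    exact card_powTorsion_mul_pow_le_of_lt (by rw [hS, hS]; exact Nat.pow_lt_pow_right hp1 hj)

end Layers

section Arithmetic

variable {p : ℝ}

lemma add_one_div_two_mul_le_pow_sub_one (hp : 3 ≤ p) (a : ℕ) :
    (p + 1) / 2 * a ≤ p ^ a - 1 := by
  induction a with
  | zero => simp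
  | succ a ih =>
    have : 1 ≤ p ^ a := one_le_pow₀ (by linarith)
    push_cast
    rw [pow_succ]
    nlinarith

lemma add_one_div_two_mul_le_geom_sum (hp : 1 ≤ p) {d : ℕ} (hd : 2 ≤ d) :
    (p + 1) / 2 * d ≤ ∑ i ∈ range d, p ^ i := by
  induction d, hd using Nat.le_induction with
  | base =>
    norm_num [sum_range_succ]
    linarith
  | succ d hd ih =>
    have : p ≤ p ^ d := le_self_pow₀ hp (by omega)
    rw [sum_range_succ]
    push_cast
    linarith

lemma add_one_div_two_mul_le_layer (hp : 3 ≤ p) {d k s a : ℕ} (hd : 2 ≤ d)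
    (hs : a ≠ 0 → d + k ≤ s + 1) :
    (p + 1) / 2 * a ≤ (p ^ (s + a) - p ^ s) / (p ^ k * (p - 1)) * (1 - p / p ^ d) := by
  rcases Nat.eq_zero_or_pos a with rfl | ha
  · simp
  obtain ⟨c, rfl⟩ : ∃ c, d = c + 1 := ⟨d - 1, by omega⟩
  obtain ⟨t, rfl⟩ : ∃ t, s = c + k + t := ⟨s - (c + k), by have := hs ha.ne'; omega⟩
  have hp1 : 0 < p - 1 := by linarith
  have hfactor : (p ^ (c + k + t + a) - p ^ (c + k + t)) / (p ^ k * (p - 1)) *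
      (1 - p / p ^ (c + 1)) = (p ^ a - 1) * (p ^ t * ((p ^ c - 1) / (p - 1))) := by
    have : 0 < p := by linarith
    field_simp
    ring
  have hpt : 1 ≤ p ^ t := one_le_pow₀ (by linarith)
  have hpc : 1 ≤ (p ^ c - 1) / (p - 1) := by
    rw [le_div_iff₀ hp1]
    linarith [le_self_pow₀ (by linarith : 1 ≤ p) (by omega : c ≠ 0)]
  calc (p + 1) / 2 * a ≤ (p ^ a - 1) * 1 := by
        linarith [add_one_div_two_mul_le_pow_sub_one hp a]
    _ ≤ _ := by
      rw [hfactor]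
      gcongr
      · linarith [one_le_pow₀ (by linarith : 1 ≤ p) (n := a)]
      · exact one_le_mul_of_one_le_of_one_le hpt hpc

lemma add_one_div_two_mul_le_sum_layers (hp : 3 ≤ p) {n : ℕ} {S : ℕ → ℕ} (hS0 : S 0 = 0)
    (hS1 : 2 ≤ S 1) (hSn : S n = n) (hSn1 : S (n + 1) = n) (hmono : Monotone S)
    (hjump : ∀ j, S (j + 1) < S (j + 2) → S 1 + j ≤ S (j + 1)) :
    (p + 1) / 2 * n ≤ ∑ k ∈ range n,
      ((p ^ S (k + 1) - p ^ S k) - (p ^ S (k + 2) - p ^ S (k + 1)) / p ^ S 1) /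
        (p ^ k * (p - 1)) := by
  obtain ⟨m, rfl⟩ : ∃ m, n = m + 1 := ⟨n - 1, by rcases n with _ | n <;> simp_all⟩
  set D : ℕ → ℝ := fun k => (p ^ S (k + 1) - p ^ S k) / (p ^ k * (p - 1))
  have hterm (k : ℕ) :
      ((p ^ S (k + 1) - p ^ S k) - (p ^ S (k + 2) - p ^ S (k + 1)) / p ^ S 1) /
        (p ^ k * (p - 1)) = D k - p / p ^ S 1 * D (k + 1) := by
    simp only [D]
    field_simp
    ring
  have hDlast : D (m + 1) = 0 := by simp [D, hSn, hSn1]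
  have hD0 : (p + 1) / 2 * S 1 ≤ D 0 := by
    have := add_one_div_two_mul_le_geom_sum (p := p) (by linarith) hS1
    rw [geom_sum_eq (by linarith)] at this
    simpa [D, hS0] using this
  have hlayer : ∀ k ∈ range m, (p + 1) / 2 * ((S (k + 2) : ℝ) - S (k + 1)) ≤
      (1 - p / p ^ S 1) * D (k + 1) := by
    intro k _
    have hle : S (k + 1) ≤ S (k + 2) := hmono (by omega)
    have := add_one_div_two_mul_le_layer hp (k := k + 1) (s := S (k + 1))
      (a := S (k + 2) - S (k + 1)) hS1 fun ha => by have := hjump k (by omega); omega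
    rw [Nat.add_sub_cancel' hle, Nat.cast_sub hle] at this
    simpa [D, mul_comm] using this
  have htelescope : ∑ k ∈ range m, ((S (k + 2) : ℝ) - S (k + 1)) = m + 1 - S 1 := by
    rw [sum_range_sub (fun k => (S (k + 1) : ℝ)), hSn]
    push_cast
    ring
  calc (p + 1) / 2 * ((m + 1 : ℕ) : ℝ)
      = (p + 1) / 2 * S 1 + ∑ k ∈ range m, (p + 1) / 2 * ((S (k + 2) : ℝ) - S (k + 1)) := by
        rw [← mul_sum, htelescope]
        push_cast
        ring
    _ ≤ D 0 + ∑ k ∈ range m, (1 - p / p ^ S 1) * D (k + 1) :=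
        add_le_add hD0 (sum_le_sum hlayer)
    _ = _ := by
        rw [sum_congr rfl fun k _ => hterm k, sum_sub_distrib, sum_range_succ', sum_range_succ,
          hDlast, mul_zero, add_zero]
        simp only [sub_mul, one_mul, sum_sub_distrib]
        ring

end Arithmetic

theorem stmt7 {G : Type*} [CommGroup G] [Finite G] {p n : ℕ} (hp : p.Prime)
    (hodd : Odd p) (hG : Nat.card G = p ^ n) (hnc : ¬ IsCyclic G) :
    (({H : Subgroup G | IsMaximalCyclic H}.ncard : ℝ)) ≥ ((p : ℝ) + 1) / 2 * n := by
  have := Fact.mk hp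
  have hp3 : (3 : ℝ) ≤ p := by
    have hp2 : p ≠ 2 := by
      rintro rfl
      exact (by decide : ¬Odd 2) hodd
    exact_mod_cast (show 3 ≤ p by have := hp.two_le; omega)
  obtain ⟨S, hS, hS0, hS1, hSn, hSn1, hmono, hjump⟩ := exists_card_powTorsion_eq_pow hG hnc
  exact (add_one_div_two_mul_le_sum_layers hp3 hS0 hS1 hSn hSn1 hmono hjump).trans
    (sum_layers_le_ncard_isMaximalCyclic (IsPGroup.of_card hG) hS n)
end

section
/- Let G be a finite p-group of nilpotence class exactly 2 and order p^n. Then the commutator subgroup G' = [G,G] has exponent dividing p^{⌊n/3⌋}. -/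
/-!
Since `[G, G]` is central, `g ↦ ⁅g, y⁆` is a homomorphism `G → G` whose kernel `K` contains `y`,
and `k ↦ ⁅x, k⁆` is a homomorphism on `K`. The commutator `c = ⁅x, y⁆` lies in the image of the
first map, in the image of the second map (as the value at `y`), and in the kernel of the second
map (being central). Counting `|G| = |im₁| · |im₂| · |ker₂|` then shows `(orderOf c)^3 ∣ |G| = p^n`,
so every commutator has order dividing `p^⌊n/3⌋`; as `[G, G]` is abelian and generated by
commutators, its exponent divides `p^⌊n/3⌋` as well.
-/

open scoped commutatorElement

open Subgroup

theorem MonoidHom.card_range_mul_card_ker {G H : Type*} [Group G] [Group H] (f : G →* H) :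
    Nat.card f.range * Nat.card f.ker = Nat.card G := by
  rw [← f.ker.card_mul_index, index_ker, mul_comm]

theorem Nat.dvd_prime_pow_div_of_pow_dvd {p n k a : ℕ} (hp : p.Prime) (hk : 0 < k)
    (h : a ^ k ∣ p ^ n) : a ∣ p ^ (n / k) := by
  obtain ⟨i, -, rfl⟩ := (Nat.dvd_prime_pow hp).mp ((dvd_pow_self a hk.ne').trans h)
  rw [← pow_mul, Nat.pow_dvd_pow_iff_le_right hp.one_lt] at h
  exact pow_dvd_pow p ((Nat.le_div_iff_mul_le hk).mpr h)

theorem commutator_le_center_of_lowerCentralSeries_two_eq_bot {G : Type*} [Group G]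
    (h : (⊤ : Subgroup G).lowerCentralSeries 2 = ⊥) : commutator G ≤ center G :=
  Subgroup.commutator_top_right_eq_bot_iff_le_center.mp h

section CentralCommutator

variable {G : Type*} [Group G] (h : commutator G ≤ center G)
include h

theorem commutatorElement_mem_center (x y : G) : ⁅x, y⁆ ∈ center G :=
  h (commutator_def G ▸ commutator_mem_commutator (mem_top x) (mem_top y))

def commutatorElementLeftHom (y : G) : G →* G where
  toFun g := ⁅g, y⁆
  map_one' := commutatorElement_one_left y
  map_mul' a b := by
    have hb := mem_center_iff.mp (commutatorElement_mem_center h b y)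
    rw [commutatorElement_mul_left_eq_conj_mul, hb a, mul_inv_cancel_right, hb]

def commutatorElementRightHom (x : G) : G →* G where
  toFun g := ⁅x, g⁆
  map_one' := commutatorElement_one_right x
  map_mul' a b := by
    have hb := mem_center_iff.mp (commutatorElement_mem_center h x b)
    rw [commutatorElement_mul_right_eq_mul_conj, mul_assoc _ a, hb, ← mul_assoc,
      mul_inv_cancel_right]

theorem orderOf_commutatorElement_pow_three_dvd_natCard (x y : G) :
    orderOf ⁅x, y⁆ ^ 3 ∣ Nat.card G := by
  set c := ⁅x, y⁆
  have hc := mem_center_iff.mp (commutatorElement_mem_center h x y)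
  let φ := commutatorElementLeftHom h y
  let ψ := (commutatorElementRightHom h x).comp φ.ker.subtype
  have hyK : y ∈ φ.ker := commutatorElement_self y
  have hcK : c ∈ φ.ker := commutatorElement_eq_one_iff_commute.mpr (hc y).symm
  have hcψ : (⟨c, hcK⟩ : φ.ker) ∈ ψ.ker := commutatorElement_eq_one_iff_commute.mpr (hc x)
  have h₁ : orderOf c ∣ Nat.card φ.range := φ.range.orderOf_dvd_natCard ⟨x, rfl⟩
  have h₂ : orderOf c ∣ Nat.card ψ.range :=
    ψ.range.orderOf_dvd_natCard ⟨⟨y, hyK⟩, rfl⟩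
  have h₃ : orderOf c ∣ Nat.card ψ.ker := by
    simpa only [orderOf_mk] using ψ.ker.orderOf_dvd_natCard hcψ
  rw [← φ.card_range_mul_card_ker, ← ψ.card_range_mul_card_ker, pow_three]
  exact mul_dvd_mul h₁ (mul_dvd_mul h₂ h₃)

theorem exponent_commutator_dvd {m : ℕ} (hm : ∀ x y : G, ⁅x, y⁆ ^ m = 1) :
    Monoid.exponent (commutator G) ∣ m := by
  suffices hpow : ∀ z ∈ commutator G, z ^ m = 1 from
    Monoid.exponent_dvd_of_forall_pow_eq_one fun z => Subtype.ext (by simpa using hpow z z.2)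
  intro z hz
  rw [commutator_eq_closure] at hz
  induction hz using closure_induction with
  | mem g hg =>
    obtain ⟨a, b, rfl⟩ := hg
    exact hm a b
  | one => exact one_pow m
  | mul a b ha _ iha ihb =>
    have hab : Commute a b :=
      (mem_center_iff.mp (h (commutator_eq_closure G ▸ ha)) b).symm
    rw [hab.mul_pow, iha, ihb, one_mul]
  | inv a _ iha => rw [inv_pow, iha, inv_one]

end CentralCommutator

theorem stmt9_general {G : Type*} [Group G] {p n : ℕ} (hp : p.Prime)
    (hG : Nat.card G = p ^ n)
    (hcl : Subgroup.lowerCentralSeries (⊤ : Subgroup G) 2 = ⊥) :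
    Monoid.exponent (commutator G) ∣ p ^ (n / 3) := by
  have hcentral := commutator_le_center_of_lowerCentralSeries_two_eq_bot hcl
  refine exponent_commutator_dvd hcentral fun x y => orderOf_dvd_iff_pow_eq_one.mp ?_
  exact Nat.dvd_prime_pow_div_of_pow_dvd hp three_pos
    (hG ▸ orderOf_commutatorElement_pow_three_dvd_natCard hcentral x y)

theorem stmt9 {G : Type*} [Group G] [Finite G] {p n : ℕ} (hp : p.Prime)
    (hG : Nat.card G = p ^ n)
    (hcl : Subgroup.lowerCentralSeries (⊤ : Subgroup G) 2 = ⊥) (hcl' : Subgroup.lowerCentralSeries (⊤ : Subgroup G) 1 ≠ ⊥) :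
    Monoid.exponent (commutator G) ∣ p ^ (n / 3) :=
  stmt9_general hp hG hcl
end

section
/- Let G be a finite p-group of nilpotence class l ≥ 2 and order p^n. Then the l-th term G^l of the lower central series has exponent dividing p^{⌊n/(l+1)⌋}. -/
/-!
Index the lower central series as Mathlib does, `γ 0 = G`, so that `γ l = 1` and `G^l = γ (l - 1)`;
let the exponent of `γ (l - 1)` be `p ^ (k + 1)`. Commutation with a fixed element induces
homomorphisms `γ i / γ (i + 1) → γ (i + 1) / γ (i + 2)` whose images generate, so if the `p ^ k`-th
powers of some `γ i` (`i < l`) lay in `γ (i + 1)`, the same would hold down to `γ (l - 1)`, which is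
impossible. Hence every factor `γ i / γ (i + 1)`, `1 ≤ i < l`, has order at least `p ^ (k + 1)`.
Moreover `γ (l - 1)` is generated by iterated commutators `[a, b, b₁, …, b_{l-2}]`, so one of them,
`w`, has order at least `p ^ (k + 1)`. As `u ↦ [u, b, b₁, …]` and `u ↦ [a, u, b₁, …]` are
homomorphisms from `G / γ 1` into the centre sending `(a, b)` to `(w, 1)` and `(1, w⁻¹)`, also
`|G / γ 1| ≥ p ^ (2 (k + 1))`. Altogether `p ^ ((k + 1) (l + 1)) ≤ p ^ n`.
-/

open scoped commutatorElement

section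

variable {G : Type*} [Group G]

theorem commutatorElement_pow_left_of_commute {x g : G} (h : Commute x ⁅x, g⁆) (k : ℕ) :
    ⁅x ^ k, g⁆ = ⁅x, g⁆ ^ k := by
  induction k with
  | zero => simp
  | succ k ih =>
    rw [pow_succ', commutatorElement_mul_left_eq_conj_mul, ih, (h.pow_right k).eq,
      mul_inv_cancel_right, pow_succ]

theorem QuotientGroup.mk_commutatorElement {N : Subgroup G} [N.Normal] (x g : G) :
    ((⁅x, g⁆ : G) : G ⧸ N) = ⁅(x : G ⧸ N), (g : G ⧸ N)⁆ :=
  map_commutatorElement (QuotientGroup.mk' N) x g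

theorem orderOf_mul_orderOf_dvd_index {M : Type*} [Group M] {N : Subgroup G} (f h : G →* M)
    (hf : N ≤ f.ker) (hh : N ≤ h.ker) {a b : G} (hfb : f b = 1) (hha : h a = 1) :
    orderOf (f a) * orderOf (h b) ∣ N.index := by
  have hrange : (Subgroup.zpowers (f a)).prod (Subgroup.zpowers (h b)) ≤ (f.prod h).range := by
    rintro ⟨_, _⟩ ⟨⟨i, rfl⟩, ⟨j, rfl⟩⟩
    exact ⟨a ^ i * b ^ j, by simp [hfb, hha]⟩
  calc orderOf (f a) * orderOf (h b)
      = Nat.card ((Subgroup.zpowers (f a)).prod (Subgroup.zpowers (h b))) := by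
        rw [Nat.card_congr (Subgroup.prodEquiv _ _).toEquiv, Nat.card_prod, Nat.card_zpowers,
          Nat.card_zpowers]
    _ ∣ Nat.card (f.prod h).range := Subgroup.card_dvd_of_le hrange
    _ = (f.prod h).ker.index := (Subgroup.index_ker _).symm
    _ ∣ N.index := Subgroup.index_dvd_of_le (by rw [MonoidHom.ker_prod]; exact le_inf hf hh)

theorem pow_dvd_relIndex_of_antitone {H : ℕ → Subgroup G} (hH : Antitone H) {a t : ℕ}
    (h : ∀ i < t, a ∣ (H (i + 1)).relIndex (H i)) : a ^ t ∣ (H t).relIndex (H 0) := by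
  induction t with
  | zero => simp [Subgroup.relIndex_self]
  | succ t ih =>
    rw [← Subgroup.relIndex_mul_relIndex _ _ _ (hH t.le_succ) (hH t.zero_le), pow_succ']
    exact mul_dvd_mul (h t t.lt_succ_self) (ih fun i hi => h i (by omega))

theorem IsPGroup.pow_succ_dvd_orderOf {p : ℕ} [Fact p.Prime] (hG : IsPGroup p G) {g : G} {k : ℕ}
    (hg : g ^ p ^ k ≠ 1) : p ^ (k + 1) ∣ orderOf g := by
  obtain ⟨j, hj⟩ := IsPGroup.iff_orderOf.mp hG g
  rw [hj]
  refine pow_dvd_pow p (Nat.succ_le_of_lt (lt_of_not_ge fun hjk => hg ?_))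
  exact orderOf_dvd_iff_pow_eq_one.mp (hj ▸ pow_dvd_pow p hjk)

theorem IsPGroup.pow_succ_dvd_relIndex {p : ℕ} [Fact p.Prime] (hG : IsPGroup p G)
    {H K : Subgroup G} [K.Normal] {x : G} (hx : x ∈ H) {k : ℕ} (hxk : x ^ p ^ k ∉ K) :
    p ^ (k + 1) ∣ K.relIndex H := by
  let q : H ⧸ K.subgroupOf H := (⟨x, hx⟩ : H)
  have hq : q ^ p ^ k ≠ 1 := by
    rwa [← QuotientGroup.mk_pow, Ne, QuotientGroup.eq_one_iff, Subgroup.mem_subgroupOf]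
  exact (((hG.to_subgroup H).to_quotient _).pow_succ_dvd_orderOf hq).trans (orderOf_dvd_natCard q)

local notation "γ" => Subgroup.lowerCentralSeries (⊤ : Subgroup G)

theorem commutatorElement_mem_lowerCentralSeries_succ {j : ℕ} {y : G} (hy : y ∈ γ j) (g : G) :
    ⁅y, g⁆ ∈ γ (j + 1) :=
  Subgroup.commutator_mem_commutator hy (Subgroup.mem_top g)

theorem commutatorElement_mem_lowerCentralSeries_succ' {j : ℕ} {y : G} (hy : y ∈ γ j) (g : G) :
    ⁅g, y⁆ ∈ γ (j + 1) := by
  simpa only [commutatorElement_inv] using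
    inv_mem (commutatorElement_mem_lowerCentralSeries_succ hy g)

theorem lowerCentralSeries_succ_induction {j : ℕ} {P : G → Prop}
    (commutator : ∀ x ∈ γ j, ∀ g, P ⁅x, g⁆) (one : P 1)
    (mul : ∀ y ∈ γ (j + 1), ∀ z ∈ γ (j + 1), P y → P z → P (y * z))
    (inv : ∀ y ∈ γ (j + 1), P y → P y⁻¹) {y : G} (hy : y ∈ γ (j + 1)) : P y := by
  induction hy using Subgroup.closure_induction with
  | mem _ h => obtain ⟨x, hx, g, -, rfl⟩ := h; exact commutator x hx g
  | one => exact one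
  | mul y z hy hz hPy hPz => exact mul y hy z hz hPy hPz
  | inv y hy hPy => exact inv y hy hPy

theorem commute_mk_of_mem_lowerCentralSeries {j : ℕ} {y : G} (hy : y ∈ γ j) (g : G) :
    Commute (y : G ⧸ γ (j + 1)) g := by
  rw [← commutatorElement_eq_one_iff_commute, ← QuotientGroup.mk_commutatorElement,
    QuotientGroup.eq_one_iff]
  exact commutatorElement_mem_lowerCentralSeries_succ hy g

theorem pow_mem_lowerCentralSeries_succ_succ {i m : ℕ} (h : ∀ x ∈ γ i, x ^ m ∈ γ (i + 1))
    {y : G} (hy : y ∈ γ (i + 1)) : y ^ m ∈ γ (i + 2) := by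
  refine lowerCentralSeries_succ_induction (P := fun y => y ^ m ∈ γ (i + 2)) ?_ ?_ ?_ ?_ hy
  · intro x hx g
    have hxg := commutatorElement_mem_lowerCentralSeries_succ hx g
    have hcomm : Commute (x : G ⧸ γ (i + 2)) ⁅(x : G ⧸ γ (i + 2)), g⁆ := by
      rw [← QuotientGroup.mk_commutatorElement]
      exact (commute_mk_of_mem_lowerCentralSeries hxg x).symm
    rw [← QuotientGroup.eq_one_iff, QuotientGroup.mk_pow, QuotientGroup.mk_commutatorElement,
      ← commutatorElement_pow_left_of_commute hcomm, ← QuotientGroup.mk_pow,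
      ← QuotientGroup.mk_commutatorElement, QuotientGroup.eq_one_iff]
    exact commutatorElement_mem_lowerCentralSeries_succ (h x hx) g
  · simp
  · intro y hy z hz hym hzm
    rw [← QuotientGroup.eq_one_iff] at hym hzm ⊢
    rw [QuotientGroup.mk_pow, QuotientGroup.mk_mul,
      (commute_mk_of_mem_lowerCentralSeries hy z).mul_pow, ← QuotientGroup.mk_pow,
      ← QuotientGroup.mk_pow, hym, hzm, one_mul]
  · intro y _ hym
    simpa only [inv_pow] using inv_mem hym

theorem pow_mem_lowerCentralSeries_succ_of_le {i j m : ℕ} (h : ∀ x ∈ γ i, x ^ m ∈ γ (i + 1))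
    (hij : i ≤ j) : ∀ y ∈ γ j, y ^ m ∈ γ (j + 1) := by
  induction j, hij using Nat.le_induction with
  | base => exact h
  | succ j _ ih => exact fun y hy => pow_mem_lowerCentralSeries_succ_succ ih hy

theorem eq_one_of_mem_lowerCentralSeries {l j : ℕ} (hbot : γ l = ⊥) (hj : l ≤ j) {z : G}
    (hz : z ∈ γ j) : z = 1 := by
  simpa [hbot] using Subgroup.lowerCentralSeries_antitone ⊤ hj hz

theorem commute_of_mem_lowerCentralSeries {l j : ℕ} (hbot : γ l = ⊥) (hj : l ≤ j + 1) {z : G}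
    (hz : z ∈ γ j) (g : G) : Commute z g :=
  commutatorElement_eq_one_iff_commute.mp <|
    eq_one_of_mem_lowerCentralSeries hbot hj (commutatorElement_mem_lowerCentralSeries_succ hz g)

def iterCommutator (bs : List G) (y : G) : G :=
  bs.foldl (fun z b => ⁅z, b⁆) y

@[simp]
theorem iterCommutator_cons (b : G) (bs : List G) (y : G) :
    iterCommutator (b :: bs) y = iterCommutator bs ⁅y, b⁆ :=
  rfl

@[simp]
theorem iterCommutator_one (bs : List G) : iterCommutator bs 1 = 1 := by
  induction bs with
  | nil => rfl
  | cons b bs ih => rw [iterCommutator_cons, commutatorElement_one_left, ih]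

theorem iterCommutator_mem_lowerCentralSeries (bs : List G) {j : ℕ} {y : G} (hy : y ∈ γ j) :
    iterCommutator bs y ∈ γ (j + bs.length) := by
  induction bs generalizing j y with
  | nil => exact hy
  | cons b bs ih =>
    rw [List.length_cons, ← add_assoc, add_right_comm]
    exact ih (commutatorElement_mem_lowerCentralSeries_succ hy b)

theorem iterCommutator_mul {l j : ℕ} (hbot : γ l = ⊥) {bs : List G} (hl : l ≤ j + bs.length + 1)
    {y z : G} (hy : y ∈ γ j) (hz : z ∈ γ j) :
    iterCommutator bs (y * z) = iterCommutator bs y * iterCommutator bs z := by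
  induction bs generalizing j y z with
  | nil => rfl
  | cons b bs ih =>
    rw [List.length_cons] at hl
    have hyb := commutatorElement_mem_lowerCentralSeries_succ hy b
    have hzb := commutatorElement_mem_lowerCentralSeries_succ hz b
    have hyzb : ⁅y, ⁅z, b⁆⁆ ∈ γ (j + 1 + 1) := commutatorElement_mem_lowerCentralSeries_succ' hzb y
    have hsplit : ⁅y * z, b⁆ = ⁅y, ⁅z, b⁆⁆ * (⁅z, b⁆ * ⁅y, b⁆) := by
      simp only [commutatorElement_def]
      group
    have hl' : l ≤ j + 1 + bs.length + 1 := by omega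
    rw [iterCommutator_cons, hsplit,
      ih hl' (Subgroup.lowerCentralSeries_antitone ⊤ (Nat.le_succ _) hyzb) (mul_mem hzb hyb),
      ih hl' hzb hyb, eq_one_of_mem_lowerCentralSeries hbot (by omega)
        (iterCommutator_mem_lowerCentralSeries bs hyzb), one_mul]
    exact (commute_of_mem_lowerCentralSeries hbot (by omega)
      (iterCommutator_mem_lowerCentralSeries bs hzb) _).eq

theorem iterCommutator_inv {l j : ℕ} (hbot : γ l = ⊥) {bs : List G} (hl : l ≤ j + bs.length + 1)
    {y : G} (hy : y ∈ γ j) : iterCommutator bs y⁻¹ = (iterCommutator bs y)⁻¹ := by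
  refine eq_inv_of_mul_eq_one_left ?_
  rw [← iterCommutator_mul hbot hl (inv_mem hy) hy, inv_mul_cancel, iterCommutator_one]

def iterCommutatorHom {l : ℕ} (hbot : γ l = ⊥) (bs : List G) (hl : l ≤ bs.length + 1) :
    G →* G where
  toFun := iterCommutator bs
  map_one' := iterCommutator_one bs
  map_mul' _ _ :=
    iterCommutator_mul hbot (j := 0) (by omega) (Subgroup.mem_top _) (Subgroup.mem_top _)

theorem lowerCentralSeries_one_le_ker_iterCommutatorHom {l : ℕ} (hbot : γ l = ⊥) (bs : List G)
    (hl : l ≤ bs.length + 1) : γ 1 ≤ (iterCommutatorHom hbot bs hl).ker := fun y hy =>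
  eq_one_of_mem_lowerCentralSeries hbot (by omega) (iterCommutator_mem_lowerCentralSeries bs hy)

theorem forall_iterCommutator_pow_eq_one_succ {l j m : ℕ} (hbot : γ l = ⊥) {bs : List G}
    (hl : l ≤ j + bs.length + 2)
    (h : ∀ x ∈ γ j, ∀ b, iterCommutator (b :: bs) x ^ m = 1) :
    ∀ y ∈ γ (j + 1), iterCommutator bs y ^ m = 1 := by
  intro y hy
  refine lowerCentralSeries_succ_induction (P := fun y => iterCommutator bs y ^ m = 1) h
    (by simp) ?_ ?_ hy
  · intro y hy z hz hym hzm
    rw [iterCommutator_mul hbot (by omega) hy hz,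
      (commute_of_mem_lowerCentralSeries hbot (by omega)
        (iterCommutator_mem_lowerCentralSeries bs hy) _).mul_pow, hym, hzm, one_mul]
  · intro y hy hym
    rw [iterCommutator_inv hbot (by omega) hy, inv_pow, hym, inv_one]

theorem exists_iterCommutator_pow_ne_one {l m : ℕ} (hbot : γ l = ⊥) {y : G}
    (hy : y ∈ γ (l - 1)) (hym : y ^ m ≠ 1) :
    ∃ (bs : List G) (x : G), bs.length = l - 1 ∧ iterCommutator bs x ^ m ≠ 1 := by
  by_contra! h
  suffices ∀ k ≤ l - 1, ∀ bs : List G, bs.length = l - 1 - k → ∀ y ∈ γ k,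
      iterCommutator bs y ^ m = 1 from
    hym (this (l - 1) le_rfl [] (by simp) y hy)
  intro k
  induction k with
  | zero => exact fun _ bs hbs y _ => h bs y hbs
  | succ k ih =>
    intro hk bs hbs
    refine forall_iterCommutator_pow_eq_one_succ hbot (by omega) fun x hx b => ?_
    exact ih (by omega) (b :: bs) (by simp; omega) x hx

theorem orderOf_iterCommutator_sq_dvd_index {l : ℕ} (hbot : γ l = ⊥) (a b : G) {bs : List G}
    (hl : l ≤ bs.length + 2) : orderOf (iterCommutator (b :: bs) a) ^ 2 ∣ (γ 1).index := by
  have hinv : iterCommutator (a :: bs) b = (iterCommutator (b :: bs) a)⁻¹ := by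
    rw [iterCommutator_cons, iterCommutator_cons, ← commutatorElement_inv,
      iterCommutator_inv hbot (j := 1) (by omega)
        (commutatorElement_mem_lowerCentralSeries_succ (Subgroup.mem_top a) b)]
  have key := orderOf_mul_orderOf_dvd_index
    (iterCommutatorHom hbot (b :: bs) hl) (iterCommutatorHom hbot (a :: bs) hl)
    (lowerCentralSeries_one_le_ker_iterCommutatorHom hbot (b :: bs) hl)
    (lowerCentralSeries_one_le_ker_iterCommutatorHom hbot (a :: bs) hl)
    (a := a) (b := b) (by simp [iterCommutatorHom]) (by simp [iterCommutatorHom])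
  change orderOf (iterCommutator (b :: bs) a) * orderOf (iterCommutator (a :: bs) b) ∣ _ at key
  rwa [hinv, orderOf_inv, ← sq] at key

theorem exists_pow_notMem_lowerCentralSeries_succ {l m : ℕ} (hbot : γ l = ⊥) {y : G}
    (hy : y ∈ γ (l - 1)) (hym : y ^ m ≠ 1) {i : ℕ} (hi : i < l) :
    ∃ x ∈ γ i, x ^ m ∉ γ (i + 1) := by
  by_contra! h
  have := pow_mem_lowerCentralSeries_succ_of_le h (by omega : i ≤ l - 1) y hy
  rw [Nat.sub_add_cancel (by omega), hbot, Subgroup.mem_bot] at this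
  exact hym this

theorem IsPGroup.pow_dvd_card_lowerCentralSeries_one {p : ℕ} [Fact p.Prime] (hG : IsPGroup p G)
    {l k : ℕ} (hbot : γ l = ⊥) {y : G} (hy : y ∈ γ (l - 1)) (hyk : y ^ p ^ k ≠ 1) :
    p ^ ((k + 1) * (l - 1)) ∣ Nat.card (γ 1) := by
  have hl : 1 ≤ l := Nat.pos_of_ne_zero fun hl => hyk (by simp_all)
  have := pow_dvd_relIndex_of_antitone (H := fun i => γ (i + 1))
    (fun i j hij => Subgroup.lowerCentralSeries_antitone ⊤ (by omega)) (t := l - 1)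
    fun i hi => by
      obtain ⟨x, hx, hxk⟩ :=
        exists_pow_notMem_lowerCentralSeries_succ hbot hy hyk (i := i + 1) (by omega)
      exact hG.pow_succ_dvd_relIndex hx hxk
  rwa [Nat.sub_add_cancel hl, hbot, Subgroup.relIndex_bot_left, ← pow_mul] at this

theorem IsPGroup.pow_dvd_index_lowerCentralSeries_one {p : ℕ} [Fact p.Prime] (hG : IsPGroup p G)
    {l k : ℕ} (hbot : γ l = ⊥) (hl : 2 ≤ l) {y : G} (hy : y ∈ γ (l - 1)) (hyk : y ^ p ^ k ≠ 1) :
    p ^ ((k + 1) * 2) ∣ (γ 1).index := by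
  obtain ⟨bs, x, hlen, hx⟩ := exists_iterCommutator_pow_ne_one hbot hy hyk
  obtain ⟨b, bs, rfl⟩ := List.exists_cons_of_length_eq_add_one (l := bs) (n := l - 2) (by omega)
  rw [pow_mul]
  exact (pow_dvd_pow_of_dvd (hG.pow_succ_dvd_orderOf hx) 2).trans
    (orderOf_iterCommutator_sq_dvd_index hbot x b (by simp at hlen; omega))

end

theorem stmt10_general {G : Type*} [Group G] [Finite G] {p n l : ℕ} (hp : p.Prime)
    (hG : Nat.card G = p ^ n) (hl : 2 ≤ l)
    (hcl : (⊤ : Subgroup G).lowerCentralSeries l = ⊥) :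
    Monoid.exponent ((⊤ : Subgroup G).lowerCentralSeries (l - 1)) ∣ p ^ (n / (l + 1)) := by
  have := Fact.mk hp
  have hpG : IsPGroup p G := IsPGroup.of_card hG
  obtain ⟨_ | k, he⟩ :=
    (hpG.to_subgroup ((⊤ : Subgroup G).lowerCentralSeries (l - 1))).exists_exponent_eq_pow
  · simp [he]
  obtain ⟨⟨y, hy⟩, hyk⟩ : ∃ y : (⊤ : Subgroup G).lowerCentralSeries (l - 1), y ^ p ^ k ≠ 1 := by
    by_contra! h
    have := he ▸ Monoid.exponent_dvd_of_forall_pow_eq_one h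
    exact absurd ((Nat.pow_dvd_pow_iff_le_right hp.one_lt).mp this) (by omega)
  replace hyk : y ^ p ^ k ≠ 1 := fun h => hyk (Subtype.ext h)
  have hcard := mul_dvd_mul (hpG.pow_dvd_card_lowerCentralSeries_one hcl hy hyk)
    (hpG.pow_dvd_index_lowerCentralSeries_one hcl hl hy hyk)
  rw [← pow_add, Subgroup.card_mul_index, hG, Nat.pow_dvd_pow_iff_le_right hp.one_lt] at hcard
  rw [he]
  refine pow_dvd_pow p ((Nat.le_div_iff_mul_le (by omega)).mpr ?_)
  calc (k + 1) * (l + 1) = (k + 1) * (l - 1) + (k + 1) * 2 := by rw [← mul_add]; congr 1; omega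
    _ ≤ n := hcard

theorem stmt10 {G : Type*} [Group G] [Finite G] {p n l : ℕ} (hp : p.Prime)
    (hG : Nat.card G = p ^ n) (hl : 2 ≤ l)
    (hcl : (⊤ : Subgroup G).lowerCentralSeries l = ⊥) (hcl' : (⊤ : Subgroup G).lowerCentralSeries (l - 1) ≠ ⊥) :
    Monoid.exponent ((⊤ : Subgroup G).lowerCentralSeries (l - 1)) ∣ p ^ (n / (l + 1)) :=
  stmt10_general hp hG hl hcl
end

section
/- Let G be a finite group. Then the number of conjugacy classes of maximal cyclic subgroups of G is at least the number of maximal cyclic subgroups of the center Z(G). -/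
def conjClass {G : Type*} [Group G] (H : Subgroup G) : Set (Subgroup G) :=
  {K | ∃ g : G, K = H.map (MulAut.conj g).toMonoidHom}

/-- The number of conjugacy classes of maximal cyclic subgroups of `G`. -/
noncomputable def eta (G : Type*) [Group G] : ℕ :=
  (conjClass '' {H : Subgroup G | IsMaximalCyclic H}).ncard

/-! Every maximal cyclic subgroup `X` of `Z(G)` is `M ∩ Z(G)` for a maximal cyclic subgroup `M`
of `G` (enlarge `X` to a maximal cyclic `M`; then `M ∩ Z(G)` is cyclic and contains `X`). Conjugation
fixes `Z(G)` pointwise, so `M ∩ Z(G)` depends only on the conjugacy class of `M`, and `X ↦ [M]` is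
injective. -/

theorem Set.SurjOn.ncard_le_ncard_image {α β γ : Type*} [Nonempty α] {s : Set α} {t : Set γ}
    {f : α → γ} (g : α → β) (hf : Set.SurjOn f s t)
    (hfg : ∀ a ∈ s, ∀ b ∈ s, g a = g b → f a = f b) (hs : (g '' s).Finite := by toFinite_tac) :
    t.ncard ≤ (g '' s).ncard := by
  refine Set.ncard_le_ncard_of_injOn (g ∘ Function.invFunOn f s)
    (fun c hc ↦ Set.mem_image_of_mem g (hf.mapsTo_invFunOn hc)) (fun c hc d hd hcd ↦ ?_) hs
  rw [← hf.rightInvOn_invFunOn hc, ← hf.rightInvOn_invFunOn hd]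
  exact hfg _ (hf.mapsTo_invFunOn hc) _ (hf.mapsTo_invFunOn hd) hcd

namespace Subgroup

variable {G : Type*} [Group G]

theorem isCyclic_subgroupOf {H : Subgroup G} [IsCyclic H] (K : Subgroup G) :
    IsCyclic (H.subgroupOf K) := by
  have : IsCyclic ↥(H ⊓ K) := isCyclic_of_injective (inclusion inf_le_left) (inclusion_injective _)
  rw [← subgroupOf_map_subtype] at this
  exact isCyclic_of_surjective _
    ((H.subgroupOf K).equivMapOfInjective _ K.subtype_injective).symm.surjective

theorem map_conj_subgroupOf_center (H : Subgroup G) (g : G) :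
    (H.map (MulAut.conj g).toMonoidHom).subgroupOf (center G) = H.subgroupOf (center G) := by
  ext ⟨z, hz⟩
  have : (MulAut.conj g).symm z = z := by
    rw [MulAut.conj_symm_apply, mem_center_iff.1 hz g⁻¹, inv_mul_cancel_right]
  simp only [mem_subgroupOf, mem_map_equiv, this]

end Subgroup

section MaximalCyclic

variable {G : Type*} [Group G]

theorem mem_conjClass_self (H : Subgroup G) : H ∈ conjClass H :=
  ⟨1, by ext; simp⟩

theorem subgroupOf_center_eq_of_conjClass_eq {H K : Subgroup G} (h : conjClass H = conjClass K) :
    H.subgroupOf (Subgroup.center G) = K.subgroupOf (Subgroup.center G) := by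
  obtain ⟨g, rfl⟩ : H ∈ conjClass K := h ▸ mem_conjClass_self H
  exact K.map_conj_subgroupOf_center g

theorem exists_isMaximalCyclic_le [Finite G] {K : Subgroup G} (hK : IsCyclic K) :
    ∃ M, IsMaximalCyclic M ∧ K ≤ M := by
  obtain ⟨M, ⟨hM, hKM⟩, hmax⟩ :=
    (Set.toFinite {L : Subgroup G | IsCyclic L ∧ K ≤ L}).exists_maximalFor id _ ⟨K, hK, le_rfl⟩
  exact ⟨M, ⟨hM, fun L hL hML ↦ le_antisymm hML (hmax ⟨hL, hKM.trans hML⟩ hML)⟩, hKM⟩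

theorem IsMaximalCyclic.exists_subgroupOf_eq [Finite G] {Z : Subgroup G} {X : Subgroup Z}
    (hX : IsMaximalCyclic X) : ∃ M : Subgroup G, IsMaximalCyclic M ∧ M.subgroupOf Z = X := by
  have := hX.1
  obtain ⟨M, hM, hXM⟩ := exists_isMaximalCyclic_le
    (isCyclic_of_surjective _ (X.equivMapOfInjective Z.subtype Z.subtype_injective).surjective)
  have := hM.1
  exact ⟨M, hM, (hX.2 _ (M.isCyclic_subgroupOf Z) (Subgroup.map_le_iff_le_comap.1 hXM)).symm⟩

end MaximalCyclic

theorem stmt13 {G : Type*} [Group G] [Finite G] :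
    eta G ≥ {H : Subgroup ↥(Subgroup.center G) | IsMaximalCyclic H}.ncard :=
  Set.SurjOn.ncard_le_ncard_image conjClass
    (fun _ hX ↦ hX.exists_subgroupOf_eq)
    (fun _ _ _ _ ↦ subgroupOf_center_eq_of_conjClass_eq)
end

section
/- Let G = ⟨x⟩ × ⟨y⟩ with x of order p^a and y of order p^b, a ≥ b ≥ 1, p prime. For integers n, c with 1 ≤ n < a, 0 ≤ c < min(p^b, p^{a-n}), and gcd(c,p) = 1, the subgroups ⟨(x^{p^n}, y^c)⟩ are pairwise distinct maximal cyclic subgroups of G. -/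
theorem stmt15 {G : Type*} [CommGroup G] {p a b : ℕ} (hp : p.Prime)
    (hab : a ≥ b) (hb : 1 ≤ b) {x y : G}
    (hx : orderOf x = p ^ a) (hy : orderOf y = p ^ b)
    (hG : ∀ g : G, ∃ i j : ℕ, g = x ^ i * y ^ j)
    (hxy : ∀ i j : ℕ, x ^ i * y ^ j = 1 → x ^ i = 1 ∧ y ^ j = 1) :
    (∀ n c : ℕ, 1 ≤ n → n < a → c < min (p ^ b) (p ^ (a - n)) → Nat.Coprime c p →
        IsMaximalCyclic (Subgroup.zpowers (x ^ p ^ n * y ^ c))) ∧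
      ∀ n c n' c' : ℕ,
        1 ≤ n → n < a → c < min (p ^ b) (p ^ (a - n)) → Nat.Coprime c p →
        1 ≤ n' → n' < a → c' < min (p ^ b) (p ^ (a - n')) → Nat.Coprime c' p →
        Subgroup.zpowers (x ^ p ^ n * y ^ c) = Subgroup.zpowers (x ^ p ^ n' * y ^ c') →
        n = n' ∧ c = c' := by
  have hp0 : 0 < p := hp.pos
  have hpa0 : 0 < p ^ a := pow_pos hp0 a
  have hpb0 : 0 < p ^ b := pow_pos hp0 b
  haveI : NeZero (p ^ a) := ⟨hpa0.ne'⟩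
  haveI : NeZero (p ^ b) := ⟨hpb0.ne'⟩
  -- G is finite
  haveI : Finite G := by
    apply Finite.of_surjective
      (fun ij : ZMod (p ^ a) × ZMod (p ^ b) => x ^ ij.1.val * y ^ ij.2.val)
    intro g
    obtain ⟨i, j, rfl⟩ := hG g
    refine ⟨((i : ZMod (p ^ a)), (j : ZMod (p ^ b))), ?_⟩
    simp only [ZMod.val_natCast]
    rw [← hx, ← hy, pow_mod_orderOf, pow_mod_orderOf]
  -- integer version of the cancellation hypothesis
  have hxyZ : ∀ i j : ℤ, x ^ i * y ^ j = 1 → x ^ i = 1 ∧ y ^ j = 1 := by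
    intro i j h
    have h1 : (0 : ℤ) ≤ i % ((p ^ a : ℕ) : ℤ) :=
      Int.emod_nonneg _ (by exact_mod_cast hpa0.ne')
    have h2 : (0 : ℤ) ≤ j % ((p ^ b : ℕ) : ℤ) :=
      Int.emod_nonneg _ (by exact_mod_cast hpb0.ne')
    have hi : x ^ i = x ^ (i % ((p ^ a : ℕ) : ℤ)).toNat := by
      rw [← zpow_natCast, Int.toNat_of_nonneg h1, ← hx, zpow_mod_orderOf]
    have hj : y ^ j = y ^ (j % ((p ^ b : ℕ) : ℤ)).toNat := by
      rw [← zpow_natCast, Int.toNat_of_nonneg h2, ← hy, zpow_mod_orderOf]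
    have := hxy _ _ (by rw [← hi, ← hj]; exact h)
    exact ⟨by rw [hi]; exact this.1, by rw [hj]; exact this.2⟩
  -- cancellation with integer exponents
  have cancelZ : ∀ i j k l : ℤ, x ^ i * y ^ j = x ^ k * y ^ l →
      ((p ^ a : ℕ) : ℤ) ∣ i - k ∧ ((p ^ b : ℕ) : ℤ) ∣ j - l := by
    intro i j k l h
    have e : x ^ (i - k) * y ^ (j - l) = 1 := by
      rw [zpow_sub, zpow_sub, mul_mul_mul_comm, h, mul_mul_mul_comm]
      simp
    obtain ⟨e1, e2⟩ := hxyZ _ _ e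
    constructor
    · rw [← hx]; exact orderOf_dvd_iff_zpow_eq_one.2 e1
    · rw [← hy]; exact orderOf_dvd_iff_zpow_eq_one.2 e2
  -- every element has p-power order
  have hxa : x ^ p ^ a = 1 := by rw [← hx]; exact pow_orderOf_eq_one x
  have hya : y ^ p ^ a = 1 := by
    have : orderOf y ∣ p ^ a := hy ▸ pow_dvd_pow p hab
    exact orderOf_dvd_iff_pow_eq_one.1 this
  have hexp : ∀ g : G, g ^ p ^ a = 1 := by
    intro g
    obtain ⟨i, j, rfl⟩ := hG g
    rw [mul_pow, ← pow_mul, mul_comm i, pow_mul, hxa, one_pow, ← pow_mul, mul_comm j,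
      pow_mul, hya, one_pow, one_mul]
  -- g = x^{p^n} y^c is not a p-th power
  have keyB : ∀ n c : ℕ, Nat.Coprime c p → ∀ h : G, x ^ p ^ n * y ^ c ≠ h ^ p := by
    intro n c hc h heq
    obtain ⟨i, j, rfl⟩ := hG h
    rw [mul_pow, ← pow_mul, ← pow_mul] at heq
    have heqZ : x ^ ((p ^ n : ℕ) : ℤ) * y ^ ((c : ℕ) : ℤ) =
        x ^ ((i * p : ℕ) : ℤ) * y ^ ((j * p : ℕ) : ℤ) := by
      rw [zpow_natCast, zpow_natCast, zpow_natCast, zpow_natCast]; exact heq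
    obtain ⟨-, hd⟩ := cancelZ _ _ _ _ heqZ
    have hpb : ((p : ℕ) : ℤ) ∣ ((p ^ b : ℕ) : ℤ) :=
      Int.natCast_dvd_natCast.2 (dvd_pow_self p (by omega))
    have hdc : ((p : ℕ) : ℤ) ∣ (c : ℤ) := by
      have h1 : ((p : ℕ) : ℤ) ∣ ((c : ℕ) : ℤ) - ((j * p : ℕ) : ℤ) := hpb.trans hd
      have h2 : ((p : ℕ) : ℤ) ∣ ((j * p : ℕ) : ℤ) :=
        Int.natCast_dvd_natCast.2 ⟨j, mul_comm j p⟩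
      simpa using dvd_add h1 h2
    have h5 : p ∣ c := Int.natCast_dvd_natCast.1 hdc
    exact hp.ne_one (Nat.eq_one_of_dvd_coprimes hc h5 dvd_rfl)
  constructor
  · -- maximality
    intro n c hn1 hna hcm hc
    set g : G := x ^ p ^ n * y ^ c with hg
    refine ⟨⟨⟨⟨g, Subgroup.mem_zpowers g⟩, fun z => by
        obtain ⟨m, hm⟩ := Subgroup.mem_zpowers_iff.1 z.2
        exact Subgroup.mem_zpowers_iff.2 ⟨m, Subtype.ext (by simpa using hm)⟩⟩⟩, ?_⟩
    intro K hK hle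
    obtain ⟨ζ, hgen⟩ := hK.exists_generator
    set k : G := (ζ : G) with hk
    have hKz : K = Subgroup.zpowers k := by
      apply le_antisymm
      · intro z hz
        obtain ⟨m, hm⟩ := Subgroup.mem_zpowers_iff.1 (hgen ⟨z, hz⟩)
        exact Subgroup.mem_zpowers_iff.2 ⟨m, by simpa using congrArg Subtype.val hm⟩
      · exact Subgroup.zpowers_le.2 ζ.2
    rw [hKz] at hle ⊢
    obtain ⟨m, hm⟩ := Subgroup.mem_zpowers_iff.1 (hle (Subgroup.mem_zpowers g))
    -- p does not divide m
    have hpm : ¬ ((p : ℤ) ∣ m) := by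
      rintro ⟨m', rfl⟩
      refine keyB n c hc (k ^ m') ?_
      rw [← hg, ← hm, ← zpow_natCast (k ^ m'), ← zpow_mul, mul_comm m']
    -- orderOf k is a power of p
    obtain ⟨t, ht, hto⟩ := (Nat.dvd_prime_pow hp).1
      (orderOf_dvd_of_pow_eq_one (hexp k))
    -- orderOf k ∣ orderOf g
    have h1 : ((orderOf k : ℕ) : ℤ) ∣ m * (orderOf g : ℤ) := by
      apply orderOf_dvd_iff_zpow_eq_one.2
      rw [zpow_mul, hm, zpow_natCast, pow_orderOf_eq_one]
    have h2 : IsCoprime ((orderOf k : ℕ) : ℤ) m := by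
      rw [hto]
      push_cast
      apply IsCoprime.pow_left
      rw [Int.isCoprime_iff_gcd_eq_one]
      have : ¬ p ∣ m.natAbs := fun hd => hpm (Int.natCast_dvd.2 hd)
      exact Nat.Coprime.gcd_eq_one ((Nat.Prime.coprime_iff_not_dvd hp).2 this)
    have h3 : orderOf k ∣ orderOf g :=
      Int.natCast_dvd_natCast.1 (h2.dvd_of_dvd_mul_left h1)
    apply Subgroup.eq_of_le_of_card_ge hle
    rw [Nat.card_zpowers, Nat.card_zpowers]
    exact Nat.le_of_dvd (orderOf_pos g) h3
  · -- distinctness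
    intro n c n' c' hn1 hna hcm hc hn1' hna' hcm' hc' hzeq
    obtain ⟨m, hm⟩ := Subgroup.mem_zpowers_iff.1
      (hzeq ▸ Subgroup.mem_zpowers (x ^ p ^ n' * y ^ c'))
    have hm2 : x ^ (((p ^ n : ℕ) : ℤ) * m) * y ^ (((c : ℕ) : ℤ) * m) =
        x ^ ((p ^ n' : ℕ) : ℤ) * y ^ ((c' : ℕ) : ℤ) := by
      rw [zpow_natCast, zpow_natCast, ← hm, mul_zpow, ← zpow_natCast x (p ^ n),
        ← zpow_natCast y c, ← zpow_mul, ← zpow_mul]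
    obtain ⟨hdx, hdy⟩ := cancelZ _ _ _ _ hm2
    push_cast at hdx hdy
    -- p does not divide m
    have hpm : ¬ ((p : ℤ) ∣ m) := by
      intro hdm
      have hpb : (p : ℤ) ∣ (p : ℤ) ^ b := dvd_pow_self _ (by omega)
      have h1 : (p : ℤ) ∣ (c : ℤ) * m - (c' : ℤ) := hpb.trans hdy
      have h2 : (p : ℤ) ∣ (c : ℤ) * m := hdm.mul_left _
      have h3 : (p : ℤ) ∣ (c' : ℤ) := by
        have h4 := dvd_sub h2 h1
        have h5 : (c : ℤ) * m - ((c : ℤ) * m - (c' : ℤ)) = (c' : ℤ) := by ring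
        rwa [h5] at h4
      have h6 : p ∣ c' := Int.natCast_dvd_natCast.1 h3
      exact hp.ne_one (Nat.eq_one_of_dvd_coprimes hc' h6 dvd_rfl)
    have hpne : (p : ℤ) ^ n ≠ 0 := by positivity
    have hnn' : n = n' := by
      rcases lt_trichotomy n n' with h | h | h
      · exfalso
        have d1 : (p : ℤ) ^ (n + 1) ∣ (p : ℤ) ^ a := pow_dvd_pow _ (by omega)
        have d2 : (p : ℤ) ^ (n + 1) ∣ (p : ℤ) ^ n' := pow_dvd_pow _ (by omega)
        have d3 : (p : ℤ) ^ (n + 1) ∣ (p : ℤ) ^ n * m := by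
          simpa using dvd_add (d1.trans hdx) d2
        rw [pow_succ] at d3
        exact hpm ((mul_dvd_mul_iff_left hpne).1 d3)
      · exact h
      · exfalso
        have d1 : (p : ℤ) ^ (n' + 1) ∣ (p : ℤ) ^ a := pow_dvd_pow _ (by omega)
        have d2 : (p : ℤ) ^ (n' + 1) ∣ (p : ℤ) ^ n * m :=
          ((pow_dvd_pow (p : ℤ) (by omega : n' + 1 ≤ n)).mul_right m)
        have d3 : (p : ℤ) ^ (n' + 1) ∣ (p : ℤ) ^ n' := by
          have h4 := dvd_sub d2 (d1.trans hdx)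
          have h5 : (p : ℤ) ^ n * m - ((p : ℤ) ^ n * m - (p : ℤ) ^ n') = (p : ℤ) ^ n' := by
            ring
          rwa [h5] at h4
        rw [pow_succ] at d3
        have h7 : (p : ℤ) ∣ 1 :=
          (mul_dvd_mul_iff_left (show (p : ℤ) ^ n' ≠ 0 by positivity)).1
            (by rw [mul_one]; exact d3)
        have h8 : p ∣ 1 := Int.natCast_dvd_natCast.1 (by exact_mod_cast h7)
        exact hp.ne_one (Nat.dvd_one.1 h8)
    subst hnn'
    refine ⟨rfl, ?_⟩
    -- p^{a-n} ∣ m - 1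
    have hsplit : (p : ℤ) ^ a = (p : ℤ) ^ n * (p : ℤ) ^ (a - n) := by
      rw [← pow_add]; congr 1; omega
    have hman : (p : ℤ) ^ (a - n) ∣ m - 1 := by
      have hfac : (p : ℤ) ^ n * m - (p : ℤ) ^ n = (p : ℤ) ^ n * (m - 1) := by ring
      have : (p : ℤ) ^ n * (p : ℤ) ^ (a - n) ∣ (p : ℤ) ^ n * (m - 1) := by
        rw [← hsplit, ← hfac]; exact hdx
      exact (mul_dvd_mul_iff_left hpne).1 this
    set e := min b (a - n) with he
    have hpe1 : (p : ℤ) ^ e ∣ m - 1 := (pow_dvd_pow _ (by omega)).trans hman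
    have hpe2 : (p : ℤ) ^ e ∣ (c : ℤ) * m - (c' : ℤ) :=
      (pow_dvd_pow _ (by omega)).trans hdy
    have hpe3 : (p : ℤ) ^ e ∣ (c : ℤ) - (c' : ℤ) := by
      have h4 : (p : ℤ) ^ e ∣ (c : ℤ) * (m - 1) := hpe1.mul_left _
      have h5 := dvd_sub hpe2 h4
      have h6 : (c : ℤ) * m - (c' : ℤ) - (c : ℤ) * (m - 1) = (c : ℤ) - (c' : ℤ) := by ring
      rwa [h6] at h5
    have hmin : min (p ^ b) (p ^ (a - n)) = p ^ e := by
      rcases le_total b (a - n) with h | h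
      · rw [min_eq_left (pow_le_pow_right₀ (by omega) h), he, min_eq_left h]
      · rw [min_eq_right (pow_le_pow_right₀ (by omega) h), he, min_eq_right h]
    rw [hmin] at hcm hcm'
    have hc1 : (c : ℤ) < (p : ℤ) ^ e := by exact_mod_cast hcm
    have hc2 : (c' : ℤ) < (p : ℤ) ^ e := by exact_mod_cast hcm'
    have habs : |(c : ℤ) - (c' : ℤ)| < (p : ℤ) ^ e := by
      rw [abs_sub_lt_iff]
      omega
    have := Int.eq_zero_of_abs_lt_dvd hpe3 habs
    omega
end

section
/- Let G be a finite p-group of order p^n and nilpotence class l ≥ 2. If |G^l| > p^{n/(l+1)}, then G^l is not cyclic. -/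
/-!
Let `G^l = γ (l - 1)` be cyclic of order `p ^ m`. Modulo the next term of the lower central series,
left-normed commutators are multiplicative in each entry, so `a ↦ ⁅a, y₁, …, yₖ⁆` is a
homomorphism from `γ j` into the central subgroup `γ (l - 1)` whenever `j + k = l - 1`. Since a
generating set of a cyclic `p`-group contains a generator, descending along these maps produces a
left-normed commutator `w = ⁅x, v, y₁, …, y_{l-2}⁆` of order `p ^ m`. Its partial commutators show
that every factor `γ j / γ (j + 1)` with `1 ≤ j ≤ l - 1` has order at least `p ^ m`, and `x`, `v`
give `p ^ (2 m)` elements in `G / γ 1`. Hence `p ^ (m (l + 1)) ≤ |G| = p ^ n`, i.e.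
`|G^l| ≤ p ^ (n / (l + 1))`.
-/

open scoped commutatorElement

lemma card_mul_card_range_le {H K : Type*} [Group H] [Group K] [Finite H] (f : H →* K)
    {N : Subgroup H} (hN : N ≤ f.ker) : Nat.card N * Nat.card f.range ≤ Nat.card H := by
  rw [← f.ker.card_mul_index, Subgroup.index_ker]
  exact Nat.mul_le_mul_right _ (Subgroup.card_le_of_le hN)

lemma pow_mul_le_of_forall_mul_le_succ {d k : ℕ} {f : ℕ → ℕ}
    (h : ∀ i < k, d * f (i + 1) ≤ f i) : d ^ k * f k ≤ f 0 := by
  induction k with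
  | zero => simp
  | succ k ih =>
    calc d ^ (k + 1) * f (k + 1) = d ^ k * (d * f (k + 1)) := by ring
      _ ≤ d ^ k * f k := Nat.mul_le_mul_left _ (h k k.lt_succ_self)
      _ ≤ f 0 := ih fun i hi => h i (by omega)

lemma lt_mul_of_rpow_div_lt_pow {p n m c : ℕ} (hp : 1 < p) (hc : 0 < c)
    (h : (p : ℝ) ^ ((n : ℝ) / c) < (p : ℝ) ^ m) : n < m * c := by
  rw [← Real.rpow_natCast, Real.rpow_lt_rpow_left_iff (by exact_mod_cast hp),
    div_lt_iff₀ (by exact_mod_cast hc)] at h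
  exact_mod_cast h

lemma QuotientGroup.mk_eq_mk_of_le {G : Type*} [Group G] {N M : Subgroup G} (hNM : N ≤ M) {a b : G} (h : (a : G ⧸ N) = b) : (a : G ⧸ M) = b :=
  QuotientGroup.eq.2 (hNM (QuotientGroup.eq.1 h))

section IteratedCommutator

variable {G : Type*} [Group G]

-- `γ j` is the paper's `G^{j+1}`: Mathlib's lower central series starts at `γ 0 = G`.
local notation "γ" => Subgroup.lowerCentralSeries (⊤ : Subgroup G)

def iteratedCommutator (a : G) (ys : List G) : G := ys.foldl (fun b y => ⁅b, y⁆) a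

@[simp] lemma iteratedCommutator_cons (a y : G) (ys : List G) :
    iteratedCommutator a (y :: ys) = iteratedCommutator ⁅a, y⁆ ys := rfl

lemma iteratedCommutator_append (a : G) (ys zs : List G) :
    iteratedCommutator a (ys ++ zs) = iteratedCommutator (iteratedCommutator a ys) zs :=
  List.foldl_append ..

@[simp] lemma iteratedCommutator_one (ys : List G) : iteratedCommutator (1 : G) ys = 1 := by
  induction ys with
  | nil => rfl
  | cons y ys ih => simpa using ih

lemma commutatorElement_mem_lowerCentralSeries_succ_left {j : ℕ} {a : G} (ha : a ∈ γ j) (y : G) :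
    ⁅a, y⁆ ∈ γ (j + 1) :=
  Subgroup.commutator_mem_commutator ha (Subgroup.mem_top y)

lemma commutatorElement_mem_lowerCentralSeries_succ_right {j : ℕ} {a : G} (ha : a ∈ γ j) (y : G) :
    ⁅y, a⁆ ∈ γ (j + 1) := by
  simpa using inv_mem (commutatorElement_mem_lowerCentralSeries_succ_left ha y)

lemma iteratedCommutator_mem {j : ℕ} {a : G} (ha : a ∈ γ j) (ys : List G) :
    iteratedCommutator a ys ∈ γ (j + ys.length) := by
  induction ys generalizing a j with
  | nil => exact ha
  | cons y ys ih =>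
    simpa [Nat.add_right_comm, add_assoc, add_comm 1] using
      ih (commutatorElement_mem_lowerCentralSeries_succ_left ha y)

lemma iteratedCommutator_mem_length (a : G) (ys : List G) :
    iteratedCommutator a ys ∈ γ ys.length := by
  simpa using iteratedCommutator_mem (j := 0) (Subgroup.mem_top a) ys

lemma commute_of_mem_of_lowerCentralSeries_succ_eq_bot {k : ℕ} (hk : γ (k + 1) = ⊥) {a : G}
    (ha : a ∈ γ k) (g : G) : Commute a g := by
  have := commutatorElement_mem_lowerCentralSeries_succ_left ha g
  rwa [hk, Subgroup.mem_bot, commutatorElement_eq_one_iff_commute] at this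

lemma mk_commutatorElement_mul {j : ℕ} (a : G) {b : G} (hb : b ∈ γ j) (y : G) :
    ((⁅a * b, y⁆ : G) : G ⧸ γ (j + 2)) = ⁅a, y⁆ * ⁅b, y⁆ := by
  have hby := commutatorElement_mem_lowerCentralSeries_succ_left hb y
  have h₁ : ((⁅a, ⁅b, y⁆⁆ : G) : G ⧸ γ (j + 2)) = 1 :=
    (QuotientGroup.eq_one_iff _).2 (commutatorElement_mem_lowerCentralSeries_succ_right hby a)
  have h₂ : ((⁅⁅b, y⁆, ⁅a, y⁆⁆ : G) : G ⧸ γ (j + 2)) = 1 :=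
    (QuotientGroup.eq_one_iff _).2 (commutatorElement_mem_lowerCentralSeries_succ_left hby _)
  rw [show ⁅a * b, y⁆ = ⁅a, ⁅b, y⁆⁆ * ⁅⁅b, y⁆, ⁅a, y⁆⁆ * (⁅a, y⁆ * ⁅b, y⁆) by group,
    QuotientGroup.mk_mul, QuotientGroup.mk_mul, h₁, h₂, one_mul, one_mul, QuotientGroup.mk_mul]

lemma mk_commutatorElement_congr {s : ℕ} {a b : G} (h : (a : G ⧸ γ s) = b) (y : G) :
    ((⁅a, y⁆ : G) : G ⧸ γ (s + 1)) = ⁅b, y⁆ := by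
  obtain ⟨c, hc, rfl⟩ : ∃ c ∈ γ s, a = b * c⁻¹ :=
    ⟨a⁻¹ * b, QuotientGroup.eq.1 h, by group⟩
  have h₁ : ((b * ⁅c⁻¹, y⁆ * b⁻¹ : G) : G ⧸ γ (s + 1)) = 1 :=
    (QuotientGroup.eq_one_iff _).2 ((Subgroup.lowerCentralSeries_normal ⊤ _).conj_mem _
      (commutatorElement_mem_lowerCentralSeries_succ_left (inv_mem hc) y) b)
  rw [show ⁅b * c⁻¹, y⁆ = b * ⁅c⁻¹, y⁆ * b⁻¹ * ⁅b, y⁆ by group, QuotientGroup.mk_mul, h₁, one_mul]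

lemma mk_iteratedCommutator_congr {s : ℕ} {a b : G} (h : (a : G ⧸ γ s) = b) (ys : List G) :
    ((iteratedCommutator a ys : G) : G ⧸ γ (s + ys.length)) = iteratedCommutator b ys := by
  induction ys generalizing a b s with
  | nil => exact h
  | cons y ys ih =>
    exact QuotientGroup.mk_eq_mk_of_le (Subgroup.lowerCentralSeries_antitone ⊤ (by simp; omega))
      (ih (mk_commutatorElement_congr h y))

lemma mk_iteratedCommutator_mul {j : ℕ} (a : G) {b : G} (hb : b ∈ γ j) (ys : List G) :
    ((iteratedCommutator (a * b) ys : G) : G ⧸ γ (j + ys.length + 1)) =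
      iteratedCommutator a ys * iteratedCommutator b ys := by
  induction ys generalizing a b j with
  | nil => rfl
  | cons y ys ih =>
    have h₁ := mk_iteratedCommutator_congr (mk_commutatorElement_mul a hb y) ys
    have h₂ := ih ⁅a, y⁆ (commutatorElement_mem_lowerCentralSeries_succ_left hb y)
    have h₂' := QuotientGroup.mk_eq_mk_of_le
      (Subgroup.lowerCentralSeries_antitone ⊤ (by omega : j + 2 + ys.length ≤ _)) h₂
    exact QuotientGroup.mk_eq_mk_of_le
      (Subgroup.lowerCentralSeries_antitone ⊤ (by simp; omega)) (h₁.trans h₂')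

lemma iteratedCommutator_eq_one {t : ℕ} {a : G} (ha : a ∈ γ t) {ys : List G}
    (hbot : γ (t + ys.length) = ⊥) : iteratedCommutator a ys = 1 := by
  simpa [hbot] using iteratedCommutator_mem ha ys

def iteratedCommutatorHom {j : ℕ} (ys : List G) (hbot : γ (j + ys.length + 1) = ⊥) :
    γ j →* G where
  toFun a := iteratedCommutator (a : G) ys
  map_one' := iteratedCommutator_one ys
  map_mul' a b := by
    have := QuotientGroup.eq.1 (mk_iteratedCommutator_mul (a : G) b.2 ys)
    rw [hbot, Subgroup.mem_bot, inv_mul_eq_one] at this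
    exact this

@[simp] lemma iteratedCommutatorHom_apply {j : ℕ} (ys : List G)
    (hbot : γ (j + ys.length + 1) = ⊥) (a : γ j) :
    iteratedCommutatorHom ys hbot a = iteratedCommutator (a : G) ys := rfl

lemma exists_iteratedCommutator_cons_pow_ne_one {j q : ℕ} {ys : List G}
    (hbot : γ (j + 1 + ys.length + 1) = ⊥) {x : G} (hx : x ∈ γ (j + 1))
    (hq : iteratedCommutator x ys ^ q ≠ 1) :
    ∃ b ∈ γ j, ∃ y, iteratedCommutator b (y :: ys) ^ q ≠ 1 := by
  by_contra! hall
  refine hq ?_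
  clear hq
  -- `φ` has central image, so `{a | φ a ^ q = 1}` is a subgroup of `γ (j + 1)`, which is generated
  -- by the `⁅b, y⁆` with `b ∈ γ j`.
  let φ := iteratedCommutatorHom ys hbot
  have hcomm (a b : γ (j + 1)) : Commute (φ a) (φ b) :=
    commute_of_mem_of_lowerCentralSeries_succ_eq_bot hbot (iteratedCommutator_mem a.2 ys) _
  rw [Subgroup.mem_lowerCentralSeries_succ_iff] at hx
  induction hx using Subgroup.closure_induction with
  | mem _ h => obtain ⟨b, hb, y, -, rfl⟩ := h; exact hall b hb y
  | one => simp
  | mul a b ha hb pa pb =>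
    change φ (⟨a, ha⟩ * ⟨b, hb⟩) ^ q = 1
    rw [map_mul, (hcomm _ _).mul_pow]
    exact (congrArg₂ _ pa pb).trans (one_mul 1)
  | inv a ha pa =>
    change φ (⟨a, ha⟩)⁻¹ ^ q = 1
    rw [map_inv, inv_pow]
    exact (congrArg _ pa).trans inv_one

lemma exists_iteratedCommutator_pow_ne_one {k q : ℕ} (hk : γ (k + 1) = ⊥) {w : G}
    (hw : w ∈ γ k) (hq : w ^ q ≠ 1) :
    ∃ x : G, ∃ ys : List G, ys.length = k ∧ iteratedCommutator x ys ^ q ≠ 1 := by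
  suffices ∀ j ≤ k, ∃ x ∈ γ j, ∃ ys : List G, j + ys.length = k ∧
      iteratedCommutator x ys ^ q ≠ 1 by
    obtain ⟨x, -, ys, hlen, hx⟩ := this 0 (Nat.zero_le k)
    exact ⟨x, ys, by omega, hx⟩
  intro j hj
  induction hj using Nat.decreasingInduction with
  | self => exact ⟨w, hw, [], rfl, hq⟩
  | of_succ j _ ih =>
    obtain ⟨x, hx, ys, hlen, hxq⟩ := ih
    obtain ⟨b, hb, y, hby⟩ := exists_iteratedCommutator_cons_pow_ne_one (by rwa [hlen]) hx hxq
    exact ⟨b, hb, y :: ys, by simp; omega, hby⟩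

lemma exists_iteratedCommutator_orderOf_eq {k : ℕ} (hk : γ (k + 1) = ⊥) [IsCyclic (γ k)]
    {p m : ℕ} [Fact p.Prime] (hcard : Nat.card (γ k) = p ^ m) :
    ∃ x : G, ∃ ys : List G, ys.length = k ∧ orderOf (iteratedCommutator x ys) = p ^ m := by
  rcases m with _ | m
  · exact ⟨1, List.replicate k 1, by simp, by simp⟩
  have hp : p.Prime := Fact.out
  obtain ⟨w, hw⟩ := IsCyclic.exists_ofOrder_eq_natCard (α := γ k)
  rw [hcard, ← Subgroup.orderOf_coe] at hw
  have hne : (w : G) ^ p ^ m ≠ 1 := pow_ne_one_of_lt_orderOf (pow_pos hp.pos m).ne'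
    (hw ▸ Nat.pow_lt_pow_right hp.one_lt m.lt_succ_self)
  obtain ⟨x, ys, hlen, hx⟩ := exists_iteratedCommutator_pow_ne_one hk w.2 hne
  refine ⟨x, ys, hlen, orderOf_eq_prime_pow hx (orderOf_dvd_iff_pow_eq_one.1 ?_)⟩
  rw [← hcard]
  exact Subgroup.orderOf_dvd_natCard _ (hlen ▸ iteratedCommutator_mem_length x ys)

lemma orderOf_iteratedCommutator_mul_card_le [Finite G] (x : G) {ys : List G}
    (hbot : γ (ys.length + 1) = ⊥) {j : ℕ} (hj : j ≤ ys.length) :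
    orderOf (iteratedCommutator x ys) * Nat.card (γ (j + 1)) ≤ Nat.card (γ j) := by
  have hlen : j + (ys.drop j).length = ys.length := by simp; omega
  let φ := iteratedCommutatorHom (ys.drop j) (hlen ▸ hbot)
  have hker : (γ (j + 1)).subgroupOf (γ j) ≤ φ.ker := fun a ha =>
    iteratedCommutator_eq_one (Subgroup.mem_subgroupOf.1 ha) (by rwa [add_right_comm, hlen])
  have hw : iteratedCommutator x ys ∈ φ.range := by
    refine ⟨⟨iteratedCommutator x (ys.take j), ?_⟩, ?_⟩
    · simpa [hj] using iteratedCommutator_mem_length x (ys.take j)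
    · simp [φ, ← iteratedCommutator_append]
  calc orderOf (iteratedCommutator x ys) * Nat.card (γ (j + 1))
      = Nat.card ((γ (j + 1)).subgroupOf (γ j)) * orderOf (iteratedCommutator x ys) := by
        rw [mul_comm, Nat.card_congr (Subgroup.subgroupOfEquivOfLe
          (Subgroup.lowerCentralSeries_antitone ⊤ j.le_succ)).toEquiv]
    _ ≤ Nat.card ((γ (j + 1)).subgroupOf (γ j)) * Nat.card φ.range :=
        Nat.mul_le_mul_left _ (Nat.le_of_dvd Nat.card_pos (φ.range.orderOf_dvd_natCard hw))
    _ ≤ Nat.card (γ j) := card_mul_card_range_le φ hker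

lemma orderOf_iteratedCommutator_sq_mul_card_le [Finite G] (x v : G) {ys : List G}
    (hbot : γ (ys.length + 2) = ⊥) :
    orderOf (iteratedCommutator x (v :: ys)) ^ 2 * Nat.card (γ 1) ≤ Nat.card G := by
  set w := iteratedCommutator x (v :: ys)
  have hbot₀ : γ (0 + (ys.length + 1) + 1) = ⊥ := by simpa using hbot
  have hbot₁ : γ (1 + ys.length + 1) = ⊥ := by rwa [add_comm 1]
  let φ := (iteratedCommutatorHom (v :: ys) hbot₀).prod (iteratedCommutatorHom (x :: ys) hbot₀)
  have hx : φ ⟨x, Subgroup.mem_top x⟩ = (w, 1) := by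
    show (w, iteratedCommutator ⁅x, x⁆ ys) = (w, 1)
    simp
  have hv : φ ⟨v, Subgroup.mem_top v⟩ = (1, w⁻¹) := by
    have hinv : iteratedCommutator ⁅v, x⁆ ys = w⁻¹ := by
      rw [← commutatorElement_inv]
      exact map_inv (iteratedCommutatorHom ys hbot₁)
        ⟨⁅x, v⁆, commutatorElement_mem_lowerCentralSeries_succ_left (Subgroup.mem_top x) v⟩
    show (iteratedCommutator ⁅v, v⁆ ys, iteratedCommutator ⁅v, x⁆ ys) = (1, w⁻¹)
    simp [hinv]
  have hker : (γ 1).subgroupOf (γ 0) ≤ φ.ker := fun a ha => by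
    have hbot' : γ (1 + (v :: ys).length) = ⊥ := by rwa [List.length_cons, add_comm 1]
    have ha' := Subgroup.mem_subgroupOf.1 ha
    show (iteratedCommutator (a : G) (v :: ys), iteratedCommutator (a : G) (x :: ys)) = 1
    rw [iteratedCommutator_eq_one ha' hbot', iteratedCommutator_eq_one (ys := x :: ys) ha' hbot']
    rfl
  have hrange : (Subgroup.zpowers w).prod (Subgroup.zpowers w) ≤ φ.range := by
    rintro ⟨_, _⟩ ⟨⟨a, rfl⟩, ⟨b, rfl⟩⟩
    refine ⟨⟨x, Subgroup.mem_top x⟩ ^ a * ⟨v, Subgroup.mem_top v⟩ ^ (-b), ?_⟩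
    rw [map_mul, map_zpow, map_zpow, hx, hv]
    simp
  calc orderOf w ^ 2 * Nat.card (γ 1)
      = Nat.card ((γ 1).subgroupOf (γ 0)) *
          Nat.card ((Subgroup.zpowers w).prod (Subgroup.zpowers w)) := by
        rw [Nat.card_congr (Subgroup.prodEquiv _ _).toEquiv, Nat.card_prod, Nat.card_zpowers,
          Nat.card_congr (Subgroup.subgroupOfEquivOfLe
            (Subgroup.lowerCentralSeries_antitone ⊤ (Nat.zero_le 1))).toEquiv]
        ring
    _ ≤ Nat.card ((γ 1).subgroupOf (γ 0)) * Nat.card φ.range :=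
        Nat.mul_le_mul_left _ (Subgroup.card_le_of_le hrange)
    _ ≤ Nat.card (γ 0) := card_mul_card_range_le φ hker
    _ = Nat.card G := Subgroup.card_top

lemma orderOf_iteratedCommutator_pow_le_card [Finite G] (x v : G) {ys : List G}
    (hbot : γ (ys.length + 2) = ⊥) :
    orderOf (iteratedCommutator x (v :: ys)) ^ (ys.length + 3) ≤ Nat.card G := by
  set d := orderOf (iteratedCommutator x (v :: ys))
  have hchain : d ^ (ys.length + 1) * Nat.card (γ (ys.length + 1 + 1)) ≤ Nat.card (γ (0 + 1)) :=
    pow_mul_le_of_forall_mul_le_succ (f := fun i => Nat.card (γ (i + 1))) fun i hi =>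
      orderOf_iteratedCommutator_mul_card_le x (ys := v :: ys) hbot (by simp; omega)
  rw [hbot, Subgroup.card_bot, mul_one] at hchain
  calc d ^ (ys.length + 3) = d ^ 2 * d ^ (ys.length + 1) := by ring
    _ ≤ d ^ 2 * Nat.card (γ 1) := Nat.mul_le_mul_left _ hchain
    _ ≤ Nat.card G := orderOf_iteratedCommutator_sq_mul_card_le x v hbot

end IteratedCommutator

theorem stmt17_general {G : Type*} [Group G] [Finite G] {p n l : ℕ} (hp : p.Prime)
    (hG : Nat.card G = p ^ n) (hl : 2 ≤ l)
    (hcl : (⊤ : Subgroup G).lowerCentralSeries l = ⊥)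
    (hbig : (Nat.card ((⊤ : Subgroup G).lowerCentralSeries (l - 1)) : ℝ) >
      (p : ℝ) ^ ((n : ℝ) / ((l : ℝ) + 1))) :
    ¬ IsCyclic ((⊤ : Subgroup G).lowerCentralSeries (l - 1)) := by
  intro hcyc
  have := Fact.mk hp
  obtain ⟨m, -, hcard⟩ := (Nat.dvd_prime_pow hp).1 (hG ▸ Subgroup.card_subgroup_dvd_card _)
  have hlt : n < m * (l + 1) := lt_mul_of_rpow_div_lt_pow hp.one_lt l.succ_pos (by
    rw [hcard, Nat.cast_pow] at hbig
    exact_mod_cast hbig)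
  obtain ⟨x, ys, hlen, hord⟩ :=
    exists_iteratedCommutator_orderOf_eq (by rwa [Nat.sub_add_cancel (by omega)]) hcard
  obtain ⟨v, ys, rfl⟩ :=
    List.exists_cons_of_length_eq_add_one (hlen.trans (by omega : l - 1 = l - 2 + 1))
  have hlen' : ys.length + 2 = l := by simp at hlen; omega
  have hle := orderOf_iteratedCommutator_pow_le_card x v (ys := ys) (hlen' ▸ hcl)
  rw [hord, hG, ← pow_mul, Nat.pow_le_pow_iff_right hp.one_lt, show ys.length + 3 = l + 1 by omega]
    at hle
  exact absurd hle (not_le.2 hlt)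

theorem stmt17 {G : Type*} [Group G] [Finite G] {p n l : ℕ} (hp : p.Prime)
    (hG : Nat.card G = p ^ n) (hl : 2 ≤ l)
    (hcl : (⊤ : Subgroup G).lowerCentralSeries l = ⊥) (hcl' : (⊤ : Subgroup G).lowerCentralSeries (l - 1) ≠ ⊥)
    (hbig : (Nat.card ((⊤ : Subgroup G).lowerCentralSeries (l - 1)) : ℝ) >
      (p : ℝ) ^ ((n : ℝ) / ((l : ℝ) + 1))) :
    ¬ IsCyclic ((⊤ : Subgroup G).lowerCentralSeries (l - 1)) :=
  stmt17_general hp hG hl hcl hbig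
end
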